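/- arXiv:2204.01773 — 13 statements merged into one kernel-verified Lean document; each statement's English description precedes it below -/
import Mathlib

section
/- Let G : Δ_Ω → ℝ be convex such that G(p₀) ≤ 1 and such that at every point p there exists an affine function h with h(p) = G(p), h ≤ G on Δ_Ω, and h(δ_ω) ≥ 0 for all ω ∈ Ω. Then for every p ∈ Δ_Ω, G(p) ≤ max_{ω} p(ω)/p₀(ω). -/
open Finset

/-- If `G` is convex on the simplex, `G p₀ ≤ 1`, and at every point of the simplex
`G` has a subtangent (affine minorant touching `G` there) that is nonnegative at
every vertex `δ_ω` (limited liability), then `G p ≤ max_ω p ω / p₀ ω` everywhere. -/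
theorem feasible_below_Gstar {Ω : Type*} [Fintype Ω] [Nonempty Ω]
    (p₀ : Ω → ℝ) (h₀ : p₀ ∈ stdSimplex ℝ Ω) (hfull : ∀ ω, 0 < p₀ ω)
    (G : (Ω → ℝ) → ℝ)
    (hG : ConvexOn ℝ (stdSimplex ℝ Ω) G)
    (hG₀ : G p₀ ≤ 1)
    (hsub : ∀ p ∈ stdSimplex ℝ Ω, ∃ (v : Ω → ℝ) (β : ℝ),
      ((∑ ω, v ω * p ω) + β = G p) ∧
      (∀ p' ∈ stdSimplex ℝ Ω, (∑ ω, v ω * p' ω) + β ≤ G p') ∧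
      (∀ ω, 0 ≤ v ω + β)) :
    ∀ p ∈ stdSimplex ℝ Ω,
      G p ≤ Finset.univ.sup' Finset.univ_nonempty (fun ω => p ω / p₀ ω) := by
  intro p hp
  set M : ℝ := Finset.univ.sup' Finset.univ_nonempty (fun ω => p ω / p₀ ω) with hM
  obtain ⟨ω₀⟩ := ‹Nonempty Ω›
  have hM0 : 0 ≤ M := le_trans (div_nonneg (hp.1 ω₀) (hfull ω₀).le)
    (Finset.le_sup' (fun ω => p ω / p₀ ω) (mem_univ ω₀))
  have hple : ∀ ω, p ω ≤ M * p₀ ω := by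
    intro ω
    have := Finset.le_sup' (fun ω => p ω / p₀ ω) (mem_univ ω)
    rw [div_le_iff₀ (hfull ω)] at this
    simpa [mul_comm] using this
  obtain ⟨v, β, htouch, hle, hll⟩ := hsub p hp
  have hsum1 : ∑ ω, p ω = 1 := hp.2
  have key : G p = ∑ ω, (v ω + β) * p ω := by
    rw [← htouch]
    simp [add_mul, Finset.sum_add_distrib, ← Finset.mul_sum, hsum1]
  rw [key]
  have step1 : ∑ ω, (v ω + β) * p ω ≤ ∑ ω, (v ω + β) * (M * p₀ ω) := by
    apply Finset.sum_le_sum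
    intro ω _
    exact mul_le_mul_of_nonneg_left (hple ω) (hll ω)
  refine step1.trans ?_
  have hsum0 : ∑ ω, p₀ ω = 1 := h₀.2
  have h2 : ∑ ω, (v ω + β) * (M * p₀ ω) = M * ((∑ ω, v ω * p₀ ω) + β) := by
    have : ∀ ω, (v ω + β) * (M * p₀ ω) = M * (v ω * p₀ ω) + M * β * p₀ ω := by
      intro ω; ring
    rw [Finset.sum_congr rfl fun ω _ => this ω, Finset.sum_add_distrib,
      ← Finset.mul_sum, ← Finset.mul_sum, hsum0]
    ring
  rw [h2]
  calc M * ((∑ ω, v ω * p₀ ω) + β) ≤ M * 1 :=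
        mul_le_mul_of_nonneg_left ((hle p₀ h₀).trans hG₀) hM0
    _ = M := mul_one M
end

section
/- Let G be feasible for the information-acquisition program: G convex on Δ_Ω, E[G(p_S)] − κ ≥ G(p₀), and every subtangent of G is nonnegative at every vertex δ_ω. If the setting is nontrivial (κ > 0 and some p_σ ≠ p₀ with positive probability), then G(p₀) > 0 and hence E[G(p_S)] − κ > 0. -/
open Finset

/-- If `G` is feasible for the information-acquisition program (convex, incentive
constraint `E[G(p_S)] - κ ≥ G(p₀)`, and limited liability via subtangents nonnegative
at every vertex) and the setting is nontrivial (`κ > 0` and some posterior differs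
from the prior with positive probability), then `G(p₀) > 0` and `E[G(p_S)] - κ > 0`. -/
theorem feasible_positive_at_prior {Ω S : Type*} [Fintype Ω] [Nonempty Ω] [Fintype S]
    (q : S → ℝ) (hq : q ∈ stdSimplex ℝ S)
    (ps : S → Ω → ℝ) (hps : ∀ σ, ps σ ∈ stdSimplex ℝ Ω)
    (p₀ : Ω → ℝ) (hprior : ∀ ω, p₀ ω = ∑ σ, q σ * ps σ ω)
    (hfull : ∀ ω, 0 < p₀ ω)
    (κ : ℝ) (hκ : 0 < κ)
    (hnontriv : ∃ σ, 0 < q σ ∧ ps σ ≠ p₀)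
    (G : (Ω → ℝ) → ℝ)
    (hG : ConvexOn ℝ (stdSimplex ℝ Ω) G)
    (hincent : (∑ σ, q σ * G (ps σ)) - κ ≥ G p₀)
    (hLL : ∀ p ∈ stdSimplex ℝ Ω, ∃ (v : Ω → ℝ) (β : ℝ),
      ((∑ ω, v ω * p ω) + β = G p) ∧
      (∀ p' ∈ stdSimplex ℝ Ω, (∑ ω, v ω * p' ω) + β ≤ G p') ∧
      (∀ ω, 0 ≤ v ω + β)) :
    0 < G p₀ ∧ 0 < (∑ σ, q σ * G (ps σ)) - κ := by
  have hp₀ : p₀ ∈ stdSimplex ℝ Ω := by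
    constructor
    · intro ω; exact (hfull ω).le
    · have : ∑ ω, p₀ ω = ∑ ω, ∑ σ, q σ * ps σ ω := by
        exact Finset.sum_congr rfl fun ω _ => hprior ω
      rw [this, Finset.sum_comm]
      have : ∀ σ ∈ (univ : Finset S), ∑ ω, q σ * ps σ ω = q σ := by
        intro σ _
        rw [← Finset.mul_sum, (hps σ).2, mul_one]
      rw [Finset.sum_congr rfl this, hq.2]
  have hGnn : 0 ≤ G p₀ := by
    obtain ⟨v, β, h1, _, h3⟩ := hLL p₀ hp₀
    have : (∑ ω, v ω * p₀ ω) + β = ∑ ω, p₀ ω * (v ω + β) := by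
      have e : ∑ ω, p₀ ω * (v ω + β) = (∑ ω, v ω * p₀ ω) + (∑ ω, p₀ ω) * β := by
        rw [Finset.sum_mul, ← Finset.sum_add_distrib]
        exact Finset.sum_congr rfl fun ω _ => by ring
      rw [e, hp₀.2, one_mul]
    rw [← h1, this]
    exact Finset.sum_nonneg fun ω _ => mul_nonneg (hfull ω).le (h3 ω)
  have hGp₀ : 0 < G p₀ := by
    by_contra hle
    push_neg at hle
    -- find σ* with positive term
    have hsumpos : 0 < ∑ σ, q σ * G (ps σ) := by linarith
    obtain ⟨σs, hσs⟩ : ∃ σ, 0 < q σ * G (ps σ) := by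
      by_contra hall
      push_neg at hall
      have : ∑ σ, q σ * G (ps σ) ≤ 0 := Finset.sum_nonpos fun σ _ => hall σ
      linarith
    have hqσ : 0 ≤ q σs := hq.1 σs
    have hc : 0 < G (ps σs) := by
      by_contra hc
      push_neg at hc
      nlinarith
    obtain ⟨v, β, h1, h2, h3⟩ := hLL (ps σs) (hps σs)
    -- choose ε = min of p₀
    have hne : (univ : Finset Ω).Nonempty := univ_nonempty
    set ε : ℝ := univ.inf' hne p₀ with hε
    have hεpos : 0 < ε := by
      rw [hε, Finset.lt_inf'_iff]
      exact fun ω _ => hfull ω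
    have hεle : ∀ ω, ε ≤ p₀ ω := fun ω => Finset.inf'_le _ (mem_univ ω)
    set y : Ω → ℝ := fun ω => (1 + ε) * p₀ ω - ε * ps σs ω with hy
    have hps1 : ∀ ω, ps σs ω ≤ 1 := by
      intro ω
      have := Finset.single_le_sum (f := ps σs) (fun i _ => (hps σs).1 i) (mem_univ ω)
      rw [(hps σs).2] at this
      exact this
    have hymem : y ∈ stdSimplex ℝ Ω := by
      constructor
      · intro ω
        have h1' := hεle ω
        have h2' := hps1 ω
        have h3' := (hps σs).1 ω
        simp only [hy]
        nlinarith
      · simp only [hy]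
        rw [Finset.sum_sub_distrib, ← Finset.mul_sum, ← Finset.mul_sum, hp₀.2, (hps σs).2]
        ring
    have hLy : (∑ ω, v ω * y ω) + β = ∑ ω, y ω * (v ω + β) := by
      have : ∑ ω, y ω * (v ω + β) = (∑ ω, v ω * y ω) + (∑ ω, y ω) * β := by
        rw [Finset.sum_mul]
        rw [← Finset.sum_add_distrib]
        exact Finset.sum_congr rfl fun ω _ => by ring
      rw [this, hymem.2, one_mul]
    have hLynn : 0 ≤ (∑ ω, v ω * y ω) + β := by
      rw [hLy]
      exact Finset.sum_nonneg fun ω _ => mul_nonneg (hymem.1 ω) (h3 ω)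
    have hlin : ∑ ω, v ω * y ω
        = (1 + ε) * (∑ ω, v ω * p₀ ω) - ε * (∑ ω, v ω * ps σs ω) := by
      rw [Finset.mul_sum, Finset.mul_sum, ← Finset.sum_sub_distrib]
      exact Finset.sum_congr rfl fun ω _ => by simp only [hy]; ring
    have h2p₀ := h2 p₀ hp₀
    nlinarith
  exact ⟨hGp₀, lt_of_lt_of_le hGp₀ hincent⟩
end

section
/- Define φ(G) = G / (E[G(p_S)] − κ) and φ'(Ḡ) = κ·Ḡ / (E[Ḡ(p_S)] − 1). In a nontrivial IA setting, G is feasible for the minimization program (convexity, E[G(p_S)] − κ ≥ G(p₀), limited liability) if and only if φ(G) is feasible for the maximization program (convexity, Ḡ(p₀) ≤ 1, E[Ḡ(p_S)] > 1, limited liability), and φ' is the inverse of φ on these feasible sets. -/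
open Finset

/-- Limited liability: at every point of the simplex `G` has a subtangent
(affine minorant touching `G` there) that is nonnegative at every vertex. -/
def LimitedLiability {Ω : Type*} [Fintype Ω] (G : (Ω → ℝ) → ℝ) : Prop :=
  ∀ p ∈ stdSimplex ℝ Ω, ∃ (v : Ω → ℝ) (β : ℝ),
    ((∑ ω, v ω * p ω) + β = G p) ∧
    (∀ p' ∈ stdSimplex ℝ Ω, (∑ ω, v ω * p' ω) + β ≤ G p') ∧
    (∀ ω, 0 ≤ v ω + β)

/-- Expected value of `G` at the posterior. -/
def Esig {Ω S : Type*} [Fintype S] (q : S → ℝ) (ps : S → Ω → ℝ)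
    (G : (Ω → ℝ) → ℝ) : ℝ :=
  ∑ σ, q σ * G (ps σ)

/-- Feasibility for the minimization program (P1). -/
def FeasMin {Ω S : Type*} [Fintype Ω] [Fintype S] (q : S → ℝ) (ps : S → Ω → ℝ)
    (p₀ : Ω → ℝ) (κ : ℝ) (G : (Ω → ℝ) → ℝ) : Prop :=
  ConvexOn ℝ (stdSimplex ℝ Ω) G ∧ LimitedLiability G ∧
    Esig q ps G - κ ≥ G p₀

/-- Feasibility for the maximization program (P2). -/
def FeasMax {Ω S : Type*} [Fintype Ω] [Fintype S] (q : S → ℝ) (ps : S → Ω → ℝ)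
    (p₀ : Ω → ℝ) (G : (Ω → ℝ) → ℝ) : Prop :=
  ConvexOn ℝ (stdSimplex ℝ Ω) G ∧ LimitedLiability G ∧
    G p₀ ≤ 1 ∧ 1 < Esig q ps G

/-! On the feasible sets both `φ` and `φ'` multiply by a positive constant, which preserves
convexity and limited liability, and the constants are inverse to each other because
`E[φ(G)(p_S)] = E[G(p_S)] / (E[G(p_S)] - κ)`. The only non-algebraic point is that
`E[G(p_S)] - κ > 0` for feasible `G`: otherwise `G(p₀) = 0`, and then every subtangent,
being nonnegative at the vertices and nonpositive at the interior point `p₀`, vanishes on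
the simplex, so `G = 0` at all posteriors and `E[G(p_S)] = 0 < κ`. -/

theorem sum_mul_add_eq_sum_add_mul {Ω : Type*} [Fintype Ω] (v : Ω → ℝ) (β : ℝ)
    {p : Ω → ℝ} (hp : ∑ ω, p ω = 1) :
    (∑ ω, v ω * p ω) + β = ∑ ω, (v ω + β) * p ω := by
  simp only [add_mul, sum_add_distrib, ← mul_sum, hp, mul_one]

namespace LimitedLiability

variable {Ω : Type*} [Fintype Ω] {G : (Ω → ℝ) → ℝ}

theorem nonneg (hG : LimitedLiability G) {p : Ω → ℝ} (hp : p ∈ stdSimplex ℝ Ω) :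
    0 ≤ G p := by
  obtain ⟨v, β, hv, -, hvert⟩ := hG p hp
  rw [← hv, sum_mul_add_eq_sum_add_mul v β hp.2]
  exact sum_nonneg fun ω _ => mul_nonneg (hvert ω) (hp.1 ω)

theorem const_mul (hG : LimitedLiability G) {c : ℝ} (hc : 0 ≤ c) :
    LimitedLiability fun p => c * G p := by
  intro p hp
  obtain ⟨v, β, hv, hle, hvert⟩ := hG p hp
  have hscale : ∀ p' : Ω → ℝ,
      (∑ ω, c * v ω * p' ω) + c * β = c * ((∑ ω, v ω * p' ω) + β) := fun p' => by
    simp only [mul_add, mul_sum, mul_assoc]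
  refine ⟨fun ω => c * v ω, c * β, ?_, fun p' hp' => ?_, fun ω => ?_⟩
  · rw [hscale, hv]
  · rw [hscale]
    exact mul_le_mul_of_nonneg_left (hle p' hp') hc
  · rw [← mul_add]
    exact mul_nonneg hc (hvert ω)

theorem apply_eq_zero_of_apply_eq_zero (hG : LimitedLiability G) {p₀ : Ω → ℝ}
    (hp₀ : p₀ ∈ stdSimplex ℝ Ω) (hfull : ∀ ω, 0 < p₀ ω) (hGp₀ : G p₀ = 0)
    {p : Ω → ℝ} (hp : p ∈ stdSimplex ℝ Ω) : G p = 0 := by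
  obtain ⟨v, β, hv, hle, hvert⟩ := hG p hp
  have hterm_nonneg : ∀ ω ∈ univ, 0 ≤ (v ω + β) * p₀ ω :=
    fun ω _ => mul_nonneg (hvert ω) (hp₀.1 ω)
  have hsum_zero : ∑ ω, (v ω + β) * p₀ ω = 0 := by
    refine le_antisymm ?_ (sum_nonneg hterm_nonneg)
    rw [← sum_mul_add_eq_sum_add_mul v β hp₀.2, ← hGp₀]
    exact hle p₀ hp₀
  have hvert_zero : ∀ ω, v ω + β = 0 := fun ω =>
    (mul_eq_zero.1 ((sum_eq_zero_iff_of_nonneg hterm_nonneg).1 hsum_zero ω (mem_univ ω))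
      ).resolve_right (hfull ω).ne'
  rw [← hv, sum_mul_add_eq_sum_add_mul v β hp.2]
  simp only [hvert_zero, zero_mul, sum_const_zero]

end LimitedLiability

/-- The map `φ` of the paper, from the minimization to the maximization program. -/
noncomputable def toMaxProgram {Ω S : Type*} [Fintype S] (q : S → ℝ) (ps : S → Ω → ℝ)
    (κ : ℝ) (G : (Ω → ℝ) → ℝ) (p : Ω → ℝ) : ℝ :=
  G p / (Esig q ps G - κ)

/-- The map `φ'` of the paper, from the maximization to the minimization program. -/
noncomputable def toMinProgram {Ω S : Type*} [Fintype S] (q : S → ℝ) (ps : S → Ω → ℝ)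
    (κ : ℝ) (G : (Ω → ℝ) → ℝ) (p : Ω → ℝ) : ℝ :=
  κ * G p / (Esig q ps G - 1)

section Feasibility

variable {Ω S : Type*} [Fintype S] {q : S → ℝ} {ps : S → Ω → ℝ} {κ : ℝ}
  {G : (Ω → ℝ) → ℝ}

theorem esig_toMaxProgram :
    Esig q ps (toMaxProgram q ps κ G) = Esig q ps G / (Esig q ps G - κ) := by
  simp only [Esig, toMaxProgram, sum_div, mul_div_assoc]

theorem esig_toMinProgram :
    Esig q ps (toMinProgram q ps κ G) = κ / (Esig q ps G - 1) * Esig q ps G := by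
  simp only [Esig, toMinProgram, mul_sum, mul_div_right_comm κ, mul_left_comm]

theorem toMinProgram_toMaxProgram (hκ : κ ≠ 0) (hpos : Esig q ps G - κ ≠ 0) :
    toMinProgram q ps κ (toMaxProgram q ps κ G) = G := by
  have hE : Esig q ps (toMaxProgram q ps κ G) - 1 = κ / (Esig q ps G - κ) := by
    rw [esig_toMaxProgram]
    field_simp
    ring
  funext p
  rw [toMinProgram, hE, toMaxProgram]
  field_simp

theorem toMaxProgram_toMinProgram (hκ : κ ≠ 0) (hpos : Esig q ps G - 1 ≠ 0) :
    toMaxProgram q ps κ (toMinProgram q ps κ G) = G := by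
  have hE : Esig q ps (toMinProgram q ps κ G) - κ = κ / (Esig q ps G - 1) := by
    rw [esig_toMinProgram]
    field_simp
    ring
  funext p
  rw [toMaxProgram, hE, toMinProgram]
  field_simp

variable [Fintype Ω] {p₀ : Ω → ℝ}

theorem FeasMin.esig_sub_pos (hG : FeasMin q ps p₀ κ G)
    (hps : ∀ σ, ps σ ∈ stdSimplex ℝ Ω) (hp₀ : p₀ ∈ stdSimplex ℝ Ω)
    (hfull : ∀ ω, 0 < p₀ ω) (hκ : 0 < κ) : 0 < Esig q ps G - κ := by
  obtain ⟨-, hLL, hfeas⟩ := hG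
  by_contra! hle
  have hGp₀ : G p₀ = 0 := le_antisymm (hfeas.trans hle) (hLL.nonneg hp₀)
  have hE : Esig q ps G = 0 :=
    sum_eq_zero fun σ _ => by
      rw [hLL.apply_eq_zero_of_apply_eq_zero hp₀ hfull hGp₀ (hps σ), mul_zero]
  linarith

theorem FeasMin.feasMax_toMaxProgram (hG : FeasMin q ps p₀ κ G) (hκ : 0 < κ)
    (hpos : 0 < Esig q ps G - κ) : FeasMax q ps p₀ (toMaxProgram q ps κ G) := by
  obtain ⟨hconv, hLL, hfeas⟩ := hG
  have hc : 0 ≤ (Esig q ps G - κ)⁻¹ := inv_nonneg.2 hpos.le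
  have hφ : toMaxProgram q ps κ G = fun p => (Esig q ps G - κ)⁻¹ * G p := by
    funext p
    exact div_eq_inv_mul _ _
  refine ⟨hφ ▸ hconv.smul hc, hφ ▸ hLL.const_mul hc, (div_le_one hpos).2 hfeas, ?_⟩
  rw [esig_toMaxProgram, one_lt_div hpos]
  linarith

theorem FeasMax.feasMin_toMinProgram (hG : FeasMax q ps p₀ G) (hκ : 0 < κ) :
    FeasMin q ps p₀ κ (toMinProgram q ps κ G) := by
  obtain ⟨hconv, hLL, hle, hgt⟩ := hG
  have hc : 0 ≤ κ / (Esig q ps G - 1) := (div_pos hκ (sub_pos.2 hgt)).le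
  have hφ' : toMinProgram q ps κ G = fun p => κ / (Esig q ps G - 1) * G p := by
    funext p
    exact mul_div_right_comm _ _ _
  have hE : Esig q ps (toMinProgram q ps κ G) - κ = κ / (Esig q ps G - 1) := by
    have hD : Esig q ps G - 1 ≠ 0 := (sub_pos.2 hgt).ne'
    rw [esig_toMinProgram]
    field_simp
    ring
  refine ⟨hφ' ▸ hconv.smul hc, hφ' ▸ hLL.const_mul hc, ?_⟩
  rw [ge_iff_le, hE, hφ']
  exact mul_le_of_le_one_right hc hle

end Feasibility

theorem feasibility_equivalence_general {Ω S : Type*} [Fintype Ω] [Fintype S]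
    (q : S → ℝ) (hq : q ∈ stdSimplex ℝ S)
    (ps : S → Ω → ℝ) (hps : ∀ σ, ps σ ∈ stdSimplex ℝ Ω)
    (p₀ : Ω → ℝ) (hprior : ∀ ω, p₀ ω = ∑ σ, q σ * ps σ ω)
    (hfull : ∀ ω, 0 < p₀ ω)
    (κ : ℝ) (hκ : 0 < κ) :
    (∀ G : (Ω → ℝ) → ℝ, FeasMin q ps p₀ κ G →
      FeasMax q ps p₀ (fun p => G p / (Esig q ps G - κ))) ∧
    (∀ Gbar : (Ω → ℝ) → ℝ, FeasMax q ps p₀ Gbar →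
      FeasMin q ps p₀ κ (fun p => κ * Gbar p / (Esig q ps Gbar - 1))) ∧
    (∀ G : (Ω → ℝ) → ℝ, FeasMin q ps p₀ κ G →
      (fun p => κ * (G p / (Esig q ps G - κ)) /
        (Esig q ps (fun p' => G p' / (Esig q ps G - κ)) - 1)) = G) ∧
    (∀ Gbar : (Ω → ℝ) → ℝ, FeasMax q ps p₀ Gbar →
      (fun p => (κ * Gbar p / (Esig q ps Gbar - 1)) /
        (Esig q ps (fun p' => κ * Gbar p' / (Esig q ps Gbar - 1)) - κ)) = Gbar) := by
  have hp₀ : p₀ ∈ stdSimplex ℝ Ω := by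
    have hp₀_eq : p₀ = ∑ σ, q σ • ps σ := funext fun ω => by simp [hprior]
    rw [hp₀_eq]
    exact (convex_stdSimplex ℝ Ω).sum_mem (fun σ _ => hq.1 σ) hq.2 fun σ _ => hps σ
  have hpos : ∀ G, FeasMin q ps p₀ κ G → 0 < Esig q ps G - κ :=
    fun G hG => hG.esig_sub_pos hps hp₀ hfull hκ
  refine ⟨fun G hG => hG.feasMax_toMaxProgram hκ (hpos G hG),
    fun G hG => hG.feasMin_toMinProgram hκ,
    fun G hG => toMinProgram_toMaxProgram hκ.ne' (hpos G hG).ne',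
    fun G hG => toMaxProgram_toMinProgram hκ.ne' (sub_pos.2 hG.2.2.2).ne'⟩

/-- In a nontrivial IA setting, `φ(G) = G / (E[G(p_S)] - κ)` maps feasible solutions of
the minimization program to feasible solutions of the maximization program,
`φ'(Ḡ) = κ Ḡ / (E[Ḡ(p_S)] - 1)` maps feasible solutions backwards, and `φ` and `φ'`
are mutually inverse on the feasible sets. -/
theorem feasibility_equivalence {Ω S : Type*} [Fintype Ω] [Nonempty Ω] [Fintype S]
    (q : S → ℝ) (hq : q ∈ stdSimplex ℝ S)
    (ps : S → Ω → ℝ) (hps : ∀ σ, ps σ ∈ stdSimplex ℝ Ω)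
    (p₀ : Ω → ℝ) (hprior : ∀ ω, p₀ ω = ∑ σ, q σ * ps σ ω)
    (hfull : ∀ ω, 0 < p₀ ω)
    (κ : ℝ) (hκ : 0 < κ)
    (hnontriv : ∃ σ, 0 < q σ ∧ ps σ ≠ p₀) :
    (∀ G : (Ω → ℝ) → ℝ, FeasMin q ps p₀ κ G →
      FeasMax q ps p₀ (fun p => G p / (Esig q ps G - κ))) ∧
    (∀ Gbar : (Ω → ℝ) → ℝ, FeasMax q ps p₀ Gbar →
      FeasMin q ps p₀ κ (fun p => κ * Gbar p / (Esig q ps Gbar - 1))) ∧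
    (∀ G : (Ω → ℝ) → ℝ, FeasMin q ps p₀ κ G →
      (fun p => κ * (G p / (Esig q ps G - κ)) /
        (Esig q ps (fun p' => G p' / (Esig q ps G - κ)) - 1)) = G) ∧
    (∀ Gbar : (Ω → ℝ) → ℝ, FeasMax q ps p₀ Gbar →
      (fun p => (κ * Gbar p / (Esig q ps Gbar - 1)) /
        (Esig q ps (fun p' => κ * Gbar p' / (Esig q ps Gbar - 1)) - κ)) = Gbar) :=
  feasibility_equivalence_general q hq ps hps p₀ hprior hfull κ hκ
end

section
/- In a nontrivial IA setting, G* is an optimal solution of the minimization program (minimize E[G(p_S)] subject to convexity, E[G(p_S)] − κ ≥ G(p₀), and limited liability) if and only if φ(G*) = G*/(E[G*(p_S)] − κ) is an optimal solution of the maximization program (maximize E[Ḡ(p_S)] subject to convexity, Ḡ(p₀) ≤ 1, E[Ḡ(p_S)] > 1, and limited liability). -/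
open Finset

/-- Optimality for the minimization program. -/
def OptMin {Ω S : Type*} [Fintype Ω] [Fintype S] (q : S → ℝ) (ps : S → Ω → ℝ)
    (p₀ : Ω → ℝ) (κ : ℝ) (G : (Ω → ℝ) → ℝ) : Prop :=
  FeasMin q ps p₀ κ G ∧ ∀ G', FeasMin q ps p₀ κ G' → Esig q ps G ≤ Esig q ps G'

/-- Optimality for the maximization program. -/
def OptMax {Ω S : Type*} [Fintype Ω] [Fintype S] (q : S → ℝ) (ps : S → Ω → ℝ)
    (p₀ : Ω → ℝ) (G : (Ω → ℝ) → ℝ) : Prop :=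
  FeasMax q ps p₀ G ∧ ∀ G', FeasMax q ps p₀ G' → Esig q ps G' ≤ Esig q ps G

private lemma sum_rewrite {Ω : Type*} [Fintype Ω] (v : Ω → ℝ) (β : ℝ)
    {p : Ω → ℝ} (hp : p ∈ stdSimplex ℝ Ω) :
    ∑ ω, p ω * (v ω + β) = (∑ ω, v ω * p ω) + β := by
  simp only [mul_add]
  rw [Finset.sum_add_distrib, ← Finset.sum_mul, hp.2, one_mul]
  congr 1
  exact Finset.sum_congr rfl fun ω _ => mul_comm _ _

private lemma subtangent_nonneg {Ω : Type*} [Fintype Ω] (v : Ω → ℝ) (β : ℝ)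
    (hv : ∀ ω, 0 ≤ v ω + β) {p : Ω → ℝ} (hp : p ∈ stdSimplex ℝ Ω) :
    0 ≤ (∑ ω, v ω * p ω) + β := by
  rw [← sum_rewrite v β hp]
  exact Finset.sum_nonneg fun ω _ => mul_nonneg (hp.1 ω) (hv ω)

/-- Key positivity: any P1-feasible `G` has `E[G] - κ > 0`. -/
private lemma feasMin_gap_pos {Ω S : Type*} [Fintype Ω] [Fintype S]
    (q : S → ℝ) (hq : ∀ σ, 0 ≤ q σ)
    (ps : S → Ω → ℝ) (hps : ∀ σ, ps σ ∈ stdSimplex ℝ Ω)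
    (p₀ : Ω → ℝ) (hp0 : p₀ ∈ stdSimplex ℝ Ω) (hfull : ∀ ω, 0 < p₀ ω)
    (κ : ℝ) (hκ : 0 < κ) (G : (Ω → ℝ) → ℝ)
    (h : FeasMin q ps p₀ κ G) : 0 < Esig q ps G - κ := by
  obtain ⟨hconv, hLL, hge⟩ := h
  have h0 : 0 ≤ G p₀ := by
    obtain ⟨v, β, h1, h2, h3⟩ := hLL p₀ hp0
    rw [← h1]; exact subtangent_nonneg v β h3 hp0
  rcases lt_or_eq_of_le h0 with h0' | h0'
  · linarith
  -- G p₀ = 0 : show G (ps σ) = 0 for all σ, contradicting E[G] - κ ≥ 0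
  · exfalso
    have hzero : ∀ σ, G (ps σ) = 0 := by
      intro σ
      obtain ⟨v, β, h1, h2, h3⟩ := hLL (ps σ) (hps σ)
      have hle0 : (∑ ω, v ω * p₀ ω) + β ≤ 0 := by
        have := h2 p₀ hp0; linarith
      have hge0 : 0 ≤ (∑ ω, v ω * p₀ ω) + β := subtangent_nonneg v β h3 hp0
      have heq0 : ∑ ω, p₀ ω * (v ω + β) = 0 := by
        rw [sum_rewrite v β hp0]; linarith
      have hall : ∀ ω ∈ (Finset.univ : Finset Ω), p₀ ω * (v ω + β) = 0 :=
        (Finset.sum_eq_zero_iff_of_nonneg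
          (fun ω _ => mul_nonneg (hfull ω).le (h3 ω))).1 heq0
      have hvβ : ∀ ω, v ω + β = 0 := by
        intro ω
        have := hall ω (Finset.mem_univ ω)
        rcases mul_eq_zero.1 this with h' | h'
        · exact absurd h' (ne_of_gt (hfull ω))
        · exact h'
      rw [← h1, ← sum_rewrite v β (hps σ)]
      exact Finset.sum_eq_zero fun ω _ => by rw [hvβ ω, mul_zero]
    have : Esig q ps G = 0 := by
      unfold Esig
      exact Finset.sum_eq_zero fun σ _ => by rw [hzero σ, mul_zero]
    linarith

private lemma LL_scale {Ω : Type*} [Fintype Ω] {G : (Ω → ℝ) → ℝ}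
    (hLL : LimitedLiability G) {a : ℝ} (ha : 0 ≤ a) :
    LimitedLiability (fun p => a * G p) := by
  intro p hp
  obtain ⟨v, β, h1, h2, h3⟩ := hLL p hp
  refine ⟨fun ω => a * v ω, a * β, ?_, ?_, ?_⟩
  · simp only [mul_assoc]
    rw [← Finset.mul_sum, ← mul_add, h1]
  · intro p' hp'
    simp only [mul_assoc]
    rw [← Finset.mul_sum, ← mul_add]
    exact mul_le_mul_of_nonneg_left (h2 p' hp') ha
  · intro ω
    rw [← mul_add]
    exact mul_nonneg ha (h3 ω)

private lemma convex_scale {Ω : Type*} [Fintype Ω] {G : (Ω → ℝ) → ℝ}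
    (hconv : ConvexOn ℝ (stdSimplex ℝ Ω) G) {a : ℝ} (ha : 0 ≤ a) :
    ConvexOn ℝ (stdSimplex ℝ Ω) (fun p => a * G p) := by
  simpa [smul_eq_mul] using hconv.smul ha

private lemma Esig_scale {Ω S : Type*} [Fintype S] (q : S → ℝ) (ps : S → Ω → ℝ)
    (G : (Ω → ℝ) → ℝ) (a : ℝ) :
    Esig q ps (fun p => a * G p) = a * Esig q ps G := by
  unfold Esig
  rw [Finset.mul_sum]
  exact Finset.sum_congr rfl fun σ _ => by ring

/-- In a nontrivial IA setting, `G*` is optimal for the minimization program if and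
only if `φ(G*) = G*/(E[G*(p_S)] - κ)` is optimal for the maximization program;
the converse direction is expressed via the inverse map `φ'`. -/
theorem optimality_equivalence {Ω S : Type*} [Fintype Ω] [Nonempty Ω] [Fintype S]
    (q : S → ℝ) (hq : q ∈ stdSimplex ℝ S)
    (ps : S → Ω → ℝ) (hps : ∀ σ, ps σ ∈ stdSimplex ℝ Ω)
    (p₀ : Ω → ℝ) (hprior : ∀ ω, p₀ ω = ∑ σ, q σ * ps σ ω)
    (hfull : ∀ ω, 0 < p₀ ω)
    (κ : ℝ) (hκ : 0 < κ)
    (hnontriv : ∃ σ, 0 < q σ ∧ ps σ ≠ p₀) :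
    (∀ G : (Ω → ℝ) → ℝ, OptMin q ps p₀ κ G →
      OptMax q ps p₀ (fun p => G p / (Esig q ps G - κ))) ∧
    (∀ Gbar : (Ω → ℝ) → ℝ, OptMax q ps p₀ Gbar →
      OptMin q ps p₀ κ (fun p => κ * Gbar p / (Esig q ps Gbar - 1))) := by
  have hq0 : ∀ σ, 0 ≤ q σ := hq.1
  have hp0 : p₀ ∈ stdSimplex ℝ Ω := by
    refine ⟨fun ω => (hfull ω).le, ?_⟩
    calc ∑ ω, p₀ ω = ∑ ω, ∑ σ, q σ * ps σ ω :=
          Finset.sum_congr rfl fun ω _ => hprior ω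
      _ = ∑ σ, ∑ ω, q σ * ps σ ω := Finset.sum_comm
      _ = ∑ σ, q σ * ∑ ω, ps σ ω :=
          Finset.sum_congr rfl fun σ _ => (Finset.mul_sum _ _ _).symm
      _ = ∑ σ, q σ := Finset.sum_congr rfl fun σ _ => by rw [(hps σ).2, mul_one]
      _ = 1 := hq.2
  -- feasibility transfer, minimization → maximization
  have minToMax : ∀ G : (Ω → ℝ) → ℝ, FeasMin q ps p₀ κ G →
      FeasMax q ps p₀ (fun p => G p / (Esig q ps G - κ)) ∧
      Esig q ps (fun p => G p / (Esig q ps G - κ))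
        = Esig q ps G / (Esig q ps G - κ) := by
    intro G hG
    have hc : 0 < Esig q ps G - κ :=
      feasMin_gap_pos q hq0 ps hps p₀ hp0 hfull κ hκ G hG
    obtain ⟨hconv, hLL, hge⟩ := hG
    have hfun : (fun p => G p / (Esig q ps G - κ))
        = fun p => (Esig q ps G - κ)⁻¹ * G p := by
      funext p; rw [div_eq_inv_mul]
    have hvalue : Esig q ps (fun p => G p / (Esig q ps G - κ))
        = Esig q ps G / (Esig q ps G - κ) := by
      rw [hfun, Esig_scale, inv_mul_eq_div]
    refine ⟨⟨?_, ?_, ?_, ?_⟩, hvalue⟩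
    · rw [hfun]; exact convex_scale hconv (inv_nonneg.2 hc.le)
    · rw [hfun]; exact LL_scale hLL (inv_nonneg.2 hc.le)
    · show G p₀ / (Esig q ps G - κ) ≤ 1
      rw [div_le_one hc]; linarith
    · rw [hvalue, lt_div_iff₀ hc]; linarith
  -- feasibility transfer, maximization → minimization
  have maxToMin : ∀ Gb : (Ω → ℝ) → ℝ, FeasMax q ps p₀ Gb →
      FeasMin q ps p₀ κ (fun p => κ * Gb p / (Esig q ps Gb - 1)) ∧
      Esig q ps (fun p => κ * Gb p / (Esig q ps Gb - 1))
        = κ * Esig q ps Gb / (Esig q ps Gb - 1) := by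
    intro Gb hGb
    obtain ⟨hconv, hLL, hp₀le, hlt⟩ := hGb
    have hd : 0 < Esig q ps Gb - 1 := by linarith
    have he : 0 < κ / (Esig q ps Gb - 1) := div_pos hκ hd
    have hfun : (fun p => κ * Gb p / (Esig q ps Gb - 1))
        = fun p => (κ / (Esig q ps Gb - 1)) * Gb p := by
      funext p; ring
    have hvalue : Esig q ps (fun p => κ * Gb p / (Esig q ps Gb - 1))
        = κ * Esig q ps Gb / (Esig q ps Gb - 1) := by
      rw [hfun, Esig_scale]; ring
    refine ⟨⟨?_, ?_, ?_⟩, hvalue⟩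
    · rw [hfun]; exact convex_scale hconv he.le
    · rw [hfun]; exact LL_scale hLL he.le
    · show Esig q ps (fun p => κ * Gb p / (Esig q ps Gb - 1)) - κ
        ≥ κ * Gb p₀ / (Esig q ps Gb - 1)
      rw [hvalue]
      have h1 : κ * Esig q ps Gb / (Esig q ps Gb - 1) - κ
          = κ / (Esig q ps Gb - 1) := by
        field_simp
        ring
      rw [h1]
      have h2 : κ * Gb p₀ / (Esig q ps Gb - 1) = (κ / (Esig q ps Gb - 1)) * Gb p₀ := by
        ring
      rw [h2]
      calc (κ / (Esig q ps Gb - 1)) * Gb p₀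
          ≤ (κ / (Esig q ps Gb - 1)) * 1 := mul_le_mul_of_nonneg_left hp₀le he.le
        _ = κ / (Esig q ps Gb - 1) := mul_one _
  constructor
  · -- OptMin → OptMax
    intro G hG
    obtain ⟨hfeas, hopt⟩ := hG
    have hc : 0 < Esig q ps G - κ :=
      feasMin_gap_pos q hq0 ps hps p₀ hp0 hfull κ hκ G hfeas
    obtain ⟨hfeasM, hval⟩ := minToMax G hfeas
    refine ⟨hfeasM, ?_⟩
    intro Gb' hGb'
    obtain ⟨hfeas', hval'⟩ := maxToMin Gb' hGb'
    have hd' : 0 < Esig q ps Gb' - 1 := by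
      have := hGb'.2.2.2; linarith
    have hle : Esig q ps G ≤ κ * Esig q ps Gb' / (Esig q ps Gb' - 1) := by
      have := hopt _ hfeas'
      rwa [hval'] at this
    rw [hval, le_div_iff₀ hc]
    have h2 : Esig q ps G * (Esig q ps Gb' - 1) ≤ κ * Esig q ps Gb' :=
      (le_div_iff₀ hd').1 hle
    nlinarith
  · -- OptMax → OptMin
    intro Gb hGb
    obtain ⟨hfeas, hopt⟩ := hGb
    have hd : 0 < Esig q ps Gb - 1 := by
      have := hfeas.2.2.2; linarith
    obtain ⟨hfeasm, hval⟩ := maxToMin Gb hfeas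
    refine ⟨hfeasm, ?_⟩
    intro G' hG'
    have hc' : 0 < Esig q ps G' - κ :=
      feasMin_gap_pos q hq0 ps hps p₀ hp0 hfull κ hκ G' hG'
    obtain ⟨hfeasM', hval'⟩ := minToMax G' hG'
    have hle : Esig q ps G' / (Esig q ps G' - κ) ≤ Esig q ps Gb := by
      have := hopt _ hfeasM'
      rwa [hval'] at this
    rw [hval, div_le_iff₀ hd]
    have h2 : Esig q ps G' ≤ Esig q ps Gb * (Esig q ps G' - κ) :=
      (div_le_iff₀ hc').1 hle
    nlinarith
end

section
/- In a nontrivial IA setting with full-support prior p₀, the function Ḡ*(p) = max_ω p(ω)/p₀(ω) is an optimal solution to the maximization program: among all subdifferentiable convex Ḡ on Δ_Ω with Ḡ(p₀) ≤ 1 and all subtangents nonnegative at every vertex δ_ω, Ḡ* pointwise dominates Ḡ (i.e. Ḡ(p) ≤ Ḡ*(p) for all p), and consequently E[Ḡ(p_S)] ≤ E[Ḡ*(p_S)]. -/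
open Finset

/-- `Ḡ*(p) = max_ω p ω / p₀ ω` is optimal for the maximization program: it pointwise
dominates every subdifferentiable convex `Ḡ` with `Ḡ(p₀) ≤ 1` whose subtangents are
nonnegative at every vertex, and hence has at least as large an expected value. -/
theorem Gstar_optimal_max {Ω S : Type*} [Fintype Ω] [Nonempty Ω] [Fintype S]
    (q : S → ℝ) (hq : q ∈ stdSimplex ℝ S)
    (ps : S → Ω → ℝ) (hps : ∀ σ, ps σ ∈ stdSimplex ℝ Ω)
    (p₀ : Ω → ℝ) (hprior : ∀ ω, p₀ ω = ∑ σ, q σ * ps σ ω)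
    (hfull : ∀ ω, 0 < p₀ ω) :
    ∀ Gbar : (Ω → ℝ) → ℝ,
      ConvexOn ℝ (stdSimplex ℝ Ω) Gbar →
      Gbar p₀ ≤ 1 →
      (∀ p ∈ stdSimplex ℝ Ω, ∃ (v : Ω → ℝ) (β : ℝ),
        ((∑ ω, v ω * p ω) + β = Gbar p) ∧
        (∀ p' ∈ stdSimplex ℝ Ω, (∑ ω, v ω * p' ω) + β ≤ Gbar p') ∧
        (∀ ω, 0 ≤ v ω + β)) →
      (∀ p ∈ stdSimplex ℝ Ω,
        Gbar p ≤ Finset.univ.sup' Finset.univ_nonempty (fun ω => p ω / p₀ ω)) ∧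
      (∑ σ, q σ * Gbar (ps σ)) ≤
        ∑ σ, q σ * Finset.univ.sup' Finset.univ_nonempty (fun ω => ps σ ω / p₀ ω) := by
  intro Gbar hconv hG1 hsub
  -- p₀ is in the simplex
  have hp₀ : p₀ ∈ stdSimplex ℝ Ω := by
    constructor
    · intro ω
      rw [hprior ω]
      exact Finset.sum_nonneg fun σ _ =>
        mul_nonneg (hq.1 σ) ((hps σ).1 ω)
    · have : ∑ ω, p₀ ω = ∑ σ, q σ * ∑ ω, ps σ ω := by
        simp_rw [hprior, Finset.mul_sum]
        rw [Finset.sum_comm]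
      rw [this]
      simp_rw [fun σ => (hps σ).2, mul_one]
      exact hq.2
  have main : ∀ p ∈ stdSimplex ℝ Ω,
      Gbar p ≤ Finset.univ.sup' Finset.univ_nonempty (fun ω => p ω / p₀ ω) := by
    intro p hp
    set M := Finset.univ.sup' Finset.univ_nonempty (fun ω => p ω / p₀ ω) with hM
    have hMle : ∀ ω, p ω ≤ M * p₀ ω := by
      intro ω
      have h1 : p ω / p₀ ω ≤ M :=
        Finset.le_sup' (fun ω => p ω / p₀ ω) (Finset.mem_univ ω)
      calc p ω = p ω / p₀ ω * p₀ ω := (div_mul_cancel₀ _ (hfull ω).ne').symm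
        _ ≤ M * p₀ ω := mul_le_mul_of_nonneg_right h1 (hfull ω).le
    have hM0 : 0 ≤ M := by
      obtain ⟨ω⟩ := ‹Nonempty Ω›
      refine le_trans ?_ (Finset.le_sup' (fun ω => p ω / p₀ ω) (Finset.mem_univ ω))
      exact div_nonneg (hp.1 ω) (hfull ω).le
    obtain ⟨v, β, heq, hle, hvert⟩ := hsub p hp
    have h1 : Gbar p = ∑ ω, (v ω + β) * p ω := by
      rw [← heq]
      simp_rw [add_mul]
      rw [Finset.sum_add_distrib, ← Finset.mul_sum, hp.2, mul_one]
    have h2 : ∑ ω, (v ω + β) * p ω ≤ ∑ ω, (v ω + β) * (M * p₀ ω) :=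
      Finset.sum_le_sum fun ω _ => mul_le_mul_of_nonneg_left (hMle ω) (hvert ω)
    have h3 : ∑ ω, (v ω + β) * (M * p₀ ω) = M * ((∑ ω, v ω * p₀ ω) + β) := by
      have h := hp₀.2
      have e : ∑ ω, (v ω + β) * (M * p₀ ω) = M * ∑ ω, (v ω * p₀ ω + β * p₀ ω) := by
        rw [Finset.mul_sum]; exact Finset.sum_congr rfl fun ω _ => by ring
      rw [e, Finset.sum_add_distrib, ← Finset.mul_sum, h, mul_one]
    have h4 : (∑ ω, v ω * p₀ ω) + β ≤ 1 := le_trans (hle p₀ hp₀) hG1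
    calc Gbar p = ∑ ω, (v ω + β) * p ω := h1
      _ ≤ M * ((∑ ω, v ω * p₀ ω) + β) := h2.trans_eq h3
      _ ≤ M * 1 := mul_le_mul_of_nonneg_left h4 hM0
      _ = M := mul_one M
  refine ⟨main, Finset.sum_le_sum fun σ _ =>
    mul_le_mul_of_nonneg_left (main (ps σ) (hps σ)) (hq.1 σ)⟩
end

section
/- The optimal solution to the IA minimum-payment problem is the scaled pointed polyhedral cone G*(p) = α · max_ω p(ω)/p₀(ω) with α = κ / (E[Ḡ*(p_S)] − 1), where Ḡ*(p) = max_ω p(ω)/p₀(ω): G* is feasible (convex, satisfies the incentive constraint E[G*(p_S)] − κ ≥ G*(p₀), and limited liability) and achieves the minimal value of E[G(p_S)] among feasible G. -/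
open Finset

/-- The pointed polyhedral cone `Ḡ*(p) = max_ω p ω / p₀ ω`. -/
noncomputable def Gstar {Ω : Type*} [Fintype Ω] [Nonempty Ω] (p₀ : Ω → ℝ)
    (p : Ω → ℝ) : ℝ :=
  Finset.univ.sup' Finset.univ_nonempty (fun ω => p ω / p₀ ω)

/-- In a nontrivial IA setting, the scaled pointed polyhedral cone
`G* = α · Ḡ*` with `α = κ / (E[Ḡ*(p_S)] - 1)` is feasible for the minimum-payment
program and achieves the minimal expected payment among all feasible menus. -/
theorem IA_optimal_solution {Ω S : Type*} [Fintype Ω] [Nonempty Ω] [Fintype S]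
    (q : S → ℝ) (hq : q ∈ stdSimplex ℝ S)
    (ps : S → Ω → ℝ) (hps : ∀ σ, ps σ ∈ stdSimplex ℝ Ω)
    (p₀ : Ω → ℝ) (hprior : ∀ ω, p₀ ω = ∑ σ, q σ * ps σ ω)
    (hfull : ∀ ω, 0 < p₀ ω)
    (κ : ℝ) (hκ : 0 < κ)
    (hnontriv : ∃ σ, 0 < q σ ∧ ps σ ≠ p₀) :
    FeasMin q ps p₀ κ
      (fun p => (κ / (Esig q ps (Gstar p₀) - 1)) * Gstar p₀ p) ∧
    ∀ G : (Ω → ℝ) → ℝ, FeasMin q ps p₀ κ G →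
      Esig q ps (fun p => (κ / (Esig q ps (Gstar p₀) - 1)) * Gstar p₀ p) ≤
        Esig q ps G := by
  classical
  have hle : ∀ (p : Ω → ℝ) (ω : Ω), p ω / p₀ ω ≤ Gstar p₀ p := by
    intro p ω; exact Finset.le_sup' (fun ω => p ω / p₀ ω) (Finset.mem_univ ω)
  have hle' : ∀ (p : Ω → ℝ) (ω : Ω), p ω ≤ Gstar p₀ p * p₀ ω := by
    intro p ω
    have h := hle p ω
    rwa [div_le_iff₀ (hfull ω)] at h
  have hsum1 : ∀ σ, ∑ ω, ps σ ω = 1 := fun σ => (hps σ).2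
  have hq1 : ∑ σ, q σ = 1 := hq.2
  have hp₀sum : ∑ ω, p₀ ω = 1 := by
    calc ∑ ω, p₀ ω = ∑ ω, ∑ σ, q σ * ps σ ω := by
          exact Finset.sum_congr rfl fun ω _ => hprior ω
      _ = ∑ σ, ∑ ω, q σ * ps σ ω := Finset.sum_comm
      _ = ∑ σ, q σ * ∑ ω, ps σ ω := by
          exact Finset.sum_congr rfl fun σ _ => (Finset.mul_sum _ _ _).symm
      _ = ∑ σ, q σ := by
          exact Finset.sum_congr rfl fun σ _ => by rw [hsum1 σ, mul_one]
      _ = 1 := hq1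
  have hp₀mem : p₀ ∈ stdSimplex ℝ Ω := ⟨fun ω => (hfull ω).le, hp₀sum⟩
  have hGbp₀ : Gstar p₀ p₀ = 1 := by
    apply le_antisymm
    · apply Finset.sup'_le
      intro ω _
      rw [div_self (hfull ω).ne']
    · have h := hle p₀ (Classical.arbitrary Ω)
      rwa [div_self (hfull _).ne'] at h
  -- each posterior has some coordinate ≥ prior
  have hGb_ge1 : ∀ σ, 1 ≤ Gstar p₀ (ps σ) := by
    intro σ
    by_contra hcon
    push_neg at hcon
    have hall : ∀ ω, ps σ ω < p₀ ω := by
      intro ω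
      have h := hle' (ps σ) ω
      calc ps σ ω ≤ Gstar p₀ (ps σ) * p₀ ω := h
        _ < 1 * p₀ ω := by
            exact mul_lt_mul_of_pos_right hcon (hfull ω)
        _ = p₀ ω := one_mul _
    have : (∑ ω, ps σ ω) < ∑ ω, p₀ ω :=
      Finset.sum_lt_sum_of_nonempty Finset.univ_nonempty fun ω _ => hall ω
    rw [hsum1 σ, hp₀sum] at this
    exact lt_irrefl 1 this
  -- strict inequality for the nontrivial signal
  obtain ⟨σ₀, hqσ₀, hneq⟩ := hnontriv
  have hGbσ₀ : 1 < Gstar p₀ (ps σ₀) := by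
    have hex : ∃ ω, p₀ ω < ps σ₀ ω := by
      by_contra hcon
      push_neg at hcon
      have hsum_eq : ∑ ω, ps σ₀ ω = ∑ ω, p₀ ω := by rw [hsum1, hp₀sum]
      have h := (Finset.sum_eq_sum_iff_of_le (fun ω (_ : ω ∈ Finset.univ) => hcon ω)).mp hsum_eq
      exact hneq (funext fun ω => h ω (Finset.mem_univ ω))
    obtain ⟨ω, hω⟩ := hex
    calc (1:ℝ) < ps σ₀ ω / p₀ ω := by
          rw [lt_div_iff₀ (hfull ω)]; linarith
      _ ≤ Gstar p₀ (ps σ₀) := hle _ ω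
  have hEgt1 : 1 < Esig q ps (Gstar p₀) := by
    have h : ∑ σ, q σ * 1 < ∑ σ, q σ * Gstar p₀ (ps σ) := by
      apply Finset.sum_lt_sum
      · intro σ _
        exact mul_le_mul_of_nonneg_left (hGb_ge1 σ) (hq.1 σ)
      · exact ⟨σ₀, Finset.mem_univ σ₀, by
          exact mul_lt_mul_of_pos_left hGbσ₀ hqσ₀⟩
    simpa [Esig, hq1] using h
  set Eb : ℝ := Esig q ps (Gstar p₀) with hEb
  set D : ℝ := Eb - 1 with hDdef
  have hD : 0 < D := by simp only [hDdef]; linarith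
  set α : ℝ := κ / D with hαdef
  have hα : 0 < α := div_pos hκ hD
  have hαD : α * D = κ := div_mul_cancel₀ κ hD.ne'
  have hEsig_scale : Esig q ps (fun p => α * Gstar p₀ p) = α * Eb := by
    rw [hEb, Esig, Esig, Finset.mul_sum]
    exact Finset.sum_congr rfl fun σ _ => by ring
  refine ⟨⟨?_, ?_, ?_⟩, ?_⟩
  · -- convexity
    refine ⟨convex_stdSimplex ℝ Ω, ?_⟩
    intro x hx y hy a b ha hb hab
    have hsup : Gstar p₀ (a • x + b • y) ≤ a * Gstar p₀ x + b * Gstar p₀ y := by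
      apply Finset.sup'_le
      intro ω _
      have hterm : (a • x + b • y) ω / p₀ ω = a * (x ω / p₀ ω) + b * (y ω / p₀ ω) := by
        simp only [Pi.add_apply, Pi.smul_apply, smul_eq_mul]
        field_simp
        try ring
      rw [hterm]
      exact add_le_add (mul_le_mul_of_nonneg_left (hle x ω) ha)
        (mul_le_mul_of_nonneg_left (hle y ω) hb)
    calc α * Gstar p₀ (a • x + b • y)
        ≤ α * (a * Gstar p₀ x + b * Gstar p₀ y) :=
          mul_le_mul_of_nonneg_left hsup hα.le
      _ = a • (α * Gstar p₀ x) + b • (α * Gstar p₀ y) := by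
          simp only [smul_eq_mul]; try ring
  · -- limited liability
    intro p hp
    obtain ⟨ω₀, -, hω₀⟩ := Finset.exists_mem_eq_sup' Finset.univ_nonempty
      (fun ω => p ω / p₀ ω)
    refine ⟨fun ω => if ω = ω₀ then α / p₀ ω₀ else 0, 0, ?_, ?_, ?_⟩
    · have : (∑ ω, (if ω = ω₀ then α / p₀ ω₀ else 0) * p ω) = α / p₀ ω₀ * p ω₀ := by
        rw [Finset.sum_eq_single ω₀]
        · simp
        · intro b _ hb; simp [hb]
        · intro h; exact absurd (Finset.mem_univ ω₀) h
      rw [this, add_zero]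
      show α / p₀ ω₀ * p ω₀ = α * Gstar p₀ p
      have hGp : Gstar p₀ p = p ω₀ / p₀ ω₀ := hω₀
      rw [hGp]
      field_simp
      try ring
    · intro p' hp'
      have : (∑ ω, (if ω = ω₀ then α / p₀ ω₀ else 0) * p' ω) = α / p₀ ω₀ * p' ω₀ := by
        rw [Finset.sum_eq_single ω₀]
        · simp
        · intro b _ hb; simp [hb]
        · intro h; exact absurd (Finset.mem_univ ω₀) h
      rw [this, add_zero]
      show α / p₀ ω₀ * p' ω₀ ≤ α * Gstar p₀ p'
      have h1 : α / p₀ ω₀ * p' ω₀ = α * (p' ω₀ / p₀ ω₀) := by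
        field_simp
      rw [h1]
      exact mul_le_mul_of_nonneg_left (hle p' ω₀) hα.le
    · intro ω
      by_cases hω : ω = ω₀
      · simp only [hω, if_true, add_zero]
        exact div_nonneg hα.le (hfull ω₀).le
      · simp [hω]
  · -- incentive constraint
    show Esig q ps (fun p => α * Gstar p₀ p) - κ ≥ α * Gstar p₀ p₀
    rw [hEsig_scale, hGbp₀, mul_one]
    have : α * Eb = α * D + α := by rw [hDdef]; ring
    linarith [hαD]
  · -- optimality
    intro G hG
    obtain ⟨hGconv, hGLL, hGinc⟩ := hG
    have key : ∀ σ, G (ps σ) ≤ Gstar p₀ (ps σ) * G p₀ := by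
      intro σ
      obtain ⟨v, β, heq, hmin, hnn⟩ := hGLL (ps σ) (hps σ)
      have hc : ∀ p : Ω → ℝ, (∑ ω, p ω = 1) →
          (∑ ω, v ω * p ω) + β = ∑ ω, (v ω + β) * p ω := by
        intro p hp
        have : ∑ ω, (v ω + β) * p ω = (∑ ω, v ω * p ω) + β * ∑ ω, p ω := by
          rw [Finset.mul_sum, ← Finset.sum_add_distrib]
          exact Finset.sum_congr rfl fun ω _ => by ring
        rw [this, hp, mul_one]
      have h1 : G (ps σ) = ∑ ω, (v ω + β) * ps σ ω := by
        rw [← heq, hc _ (hsum1 σ)]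
      have h2 : ∑ ω, (v ω + β) * p₀ ω ≤ G p₀ := by
        have h := hmin p₀ hp₀mem
        rwa [hc p₀ hp₀sum] at h
      have h4 : (0:ℝ) ≤ Gstar p₀ (ps σ) := le_trans zero_le_one (hGb_ge1 σ)
      have h3 : ∑ ω, (v ω + β) * ps σ ω ≤ Gstar p₀ (ps σ) * ∑ ω, (v ω + β) * p₀ ω := by
        rw [Finset.mul_sum]
        apply Finset.sum_le_sum
        intro ω _
        calc (v ω + β) * ps σ ω ≤ (v ω + β) * (Gstar p₀ (ps σ) * p₀ ω) :=
              mul_le_mul_of_nonneg_left (hle' (ps σ) ω) (hnn ω)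
          _ = Gstar p₀ (ps σ) * ((v ω + β) * p₀ ω) := by ring
      calc G (ps σ) = ∑ ω, (v ω + β) * ps σ ω := h1
        _ ≤ Gstar p₀ (ps σ) * ∑ ω, (v ω + β) * p₀ ω := h3
        _ ≤ Gstar p₀ (ps σ) * G p₀ := mul_le_mul_of_nonneg_left h2 h4
    have hEsigle : Esig q ps G ≤ Eb * G p₀ := by
      rw [hEb, Esig, Esig, Finset.sum_mul]
      apply Finset.sum_le_sum
      intro σ _
      calc q σ * G (ps σ) ≤ q σ * (Gstar p₀ (ps σ) * G p₀) :=
            mul_le_mul_of_nonneg_left (key σ) (hq.1 σ)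
        _ = q σ * Gstar p₀ (ps σ) * G p₀ := by ring
    have hM : κ + G p₀ ≤ Esig q ps G := by
      have := hGinc
      dsimp [GE.ge] at this
      linarith
    have hκD : κ ≤ D * G p₀ := by
      have hEbD : Eb = D + 1 := by rw [hDdef]; ring
      nlinarith
    have hαle : α ≤ G p₀ := by
      rw [hαdef, div_le_iff₀ hD]
      linarith [hκD, mul_comm D (G p₀)]
    rw [hEsig_scale]
    have : α * Eb = κ + α := by
      have hEbD : Eb = D + 1 := by rw [hDdef]; ring
      rw [hEbD]; nlinarith [hαD]
    rw [this]
    linarith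
end

section
/- In the hidden-action contracts setting with convexified cost curve c, a subdifferentiable convex menu G elicits action a* (i.e. G(p_{a*}) − c_{a*} ≥ G(p_a) − c_a for all a, and G(p_{a*}) − c_{a*} ≥ 0) if and only if there exists β ≥ 0 with G(p) − β ≤ c(p) for all p in the convex hull 𝒫 of the p_a, and G(p_{a*}) − β = c(p_{a*}) = c_{a*}. -/
open Finset

/-- A convex menu `G` elicits action `a*` (incentive and participation constraints)
if and only if there is a shift `β ≥ 0` such that `G - β` lies below the convexified
cost curve `c` on the hull `𝒫` of the action distributions, touching it at
`p_{a*}` where `c(p_{a*}) = c_{a*}`. -/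
theorem elicits_iff_sandwich {A Ω : Type*} [Fintype A] [Fintype Ω]
    (pdist : A → Ω → ℝ) (hp : ∀ a, pdist a ∈ stdSimplex ℝ Ω)
    (cost : A → ℝ) (hcost : ∀ a, 0 ≤ cost a)
    (c : (Ω → ℝ) → ℝ)
    -- `c` is the convexified cost curve: the minimum mixture cost implementing `p`
    (hc : ∀ p ∈ convexHull ℝ (Set.range pdist),
      (∃ lam : A → ℝ, (∀ a, 0 ≤ lam a) ∧ (∑ a, lam a) = 1 ∧
        (∀ ω, ∑ a, lam a * pdist a ω = p ω) ∧ (∑ a, lam a * cost a) = c p) ∧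
      (∀ lam : A → ℝ, (∀ a, 0 ≤ lam a) → (∑ a, lam a) = 1 →
        (∀ ω, ∑ a, lam a * pdist a ω = p ω) → c p ≤ ∑ a, lam a * cost a))
    (astar : A)
    (G : (Ω → ℝ) → ℝ)
    (hG : ConvexOn ℝ (convexHull ℝ (Set.range pdist)) G) :
    ((∀ a, G (pdist astar) - cost astar ≥ G (pdist a) - cost a) ∧
      0 ≤ G (pdist astar) - cost astar)
    ↔
    (∃ β : ℝ, 0 ≤ β ∧
      (∀ p ∈ convexHull ℝ (Set.range pdist), G p - β ≤ c p) ∧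
      G (pdist astar) - β = c (pdist astar) ∧
      c (pdist astar) = cost astar) := by
  classical
  have hmem : ∀ a, pdist a ∈ convexHull ℝ (Set.range pdist) := fun a =>
    subset_convexHull ℝ _ ⟨a, rfl⟩
  -- c(p_a) ≤ cost a using the Dirac mixture
  have hcle : ∀ a, c (pdist a) ≤ cost a := by
    intro a
    have h := (hc (pdist a) (hmem a)).2 (fun b => if b = a then 1 else 0)
      (fun b => by positivity) (by simp) (fun ω => by simp)
    simpa using h
  -- Jensen: G p ≤ ∑ lam a * G (pdist a) for any mixture representing p
  have key : ∀ (lam : A → ℝ) (p : Ω → ℝ),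
      (∀ a, 0 ≤ lam a) → (∑ a, lam a) = 1 → (∀ ω, ∑ a, lam a * pdist a ω = p ω) →
      G p ≤ ∑ a, lam a * G (pdist a) := by
    intro lam p h0 h1 heq
    have hpe : p = ∑ a, lam a • pdist a := by
      funext ω
      rw [Finset.sum_apply]
      simpa [smul_eq_mul] using (heq ω).symm
    rw [hpe]
    exact hG.map_sum_le (fun i _ => h0 i) h1 (fun i _ => hmem i)
  constructor
  · rintro ⟨hIC, hIR⟩
    refine ⟨G (pdist astar) - cost astar, hIR, ?_, ?_, ?_⟩
    · intro p hpm
      obtain ⟨⟨lam, h0, h1, heq, hcc⟩, _⟩ := hc p hpm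
      have hJ := key lam p h0 h1 heq
      have hsum : ∑ a, lam a * G (pdist a)
          ≤ ∑ a, lam a * (cost a + (G (pdist astar) - cost astar)) := by
        apply Finset.sum_le_sum
        intro i _
        have : G (pdist i) ≤ cost i + (G (pdist astar) - cost astar) := by
          have := hIC i; linarith
        exact mul_le_mul_of_nonneg_left this (h0 i)
      have hsplit : ∑ a, lam a * (cost a + (G (pdist astar) - cost astar))
          = c p + (G (pdist astar) - cost astar) := by
        rw [← hcc]
        simp [mul_add, Finset.sum_add_distrib, ← Finset.sum_mul, h1]
      linarith
    · -- G(p*) - β = c(p*), i.e. c(p*) = cost astar then trivial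
      have hub := hcle astar
      obtain ⟨⟨lam, h0, h1, heq, hcc⟩, _⟩ := hc (pdist astar) (hmem astar)
      have hJ := key lam (pdist astar) h0 h1 heq
      have hsum : ∑ a, lam a * G (pdist a)
          ≤ ∑ a, lam a * (cost a + (G (pdist astar) - cost astar)) := by
        apply Finset.sum_le_sum
        intro i _
        have : G (pdist i) ≤ cost i + (G (pdist astar) - cost astar) := by
          have := hIC i; linarith
        exact mul_le_mul_of_nonneg_left this (h0 i)
      have hsplit : ∑ a, lam a * (cost a + (G (pdist astar) - cost astar))
          = c (pdist astar) + (G (pdist astar) - cost astar) := by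
        rw [← hcc]
        simp [mul_add, Finset.sum_add_distrib, ← Finset.sum_mul, h1]
      linarith
    · have hub := hcle astar
      obtain ⟨⟨lam, h0, h1, heq, hcc⟩, _⟩ := hc (pdist astar) (hmem astar)
      have hJ := key lam (pdist astar) h0 h1 heq
      have hsum : ∑ a, lam a * G (pdist a)
          ≤ ∑ a, lam a * (cost a + (G (pdist astar) - cost astar)) := by
        apply Finset.sum_le_sum
        intro i _
        have : G (pdist i) ≤ cost i + (G (pdist astar) - cost astar) := by
          have := hIC i; linarith
        exact mul_le_mul_of_nonneg_left this (h0 i)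
      have hsplit : ∑ a, lam a * (cost a + (G (pdist astar) - cost astar))
          = c (pdist astar) + (G (pdist astar) - cost astar) := by
        rw [← hcc]
        simp [mul_add, Finset.sum_add_distrib, ← Finset.sum_mul, h1]
      linarith
  · rintro ⟨β, hβ, hbelow, htouch, hceq⟩
    constructor
    · intro a
      have h1 := hbelow (pdist a) (hmem a)
      have h2 := hcle a
      have : G (pdist astar) - cost astar = β := by linarith
      linarith
    · have : G (pdist astar) - cost astar = β := by linarith
      linarith
end

section
/- An action a* is elicitable (some convex menu G satisfies the incentive constraints G(p_{a*}) − c_{a*} ≥ G(p_a) − c_a for all a and participation G(p_{a*}) − c_{a*} ≥ 0) if and only if c(p_{a*}) = c_{a*}, i.e. the point (p_{a*}, c_{a*}) lies on the lower boundary of the convex hull of {(p_a, c_a) : a ∈ A}. -/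
/-! If a convex menu `G` elicits `a*`, take a cheapest mixture `λ` of actions implementing
`p_{a*}`: Jensen gives `G(p_{a*}) ≤ Σ λ_a G(p_a)`, and the incentive constraints bound each
`G(p_a)` by `c_a + G(p_{a*}) - c_{a*}`, so `c_{a*} ≤ Σ λ_a c_a = c(p_{a*})`. Conversely, the cost
curve is itself a convex menu (mixtures of cheapest mixtures are mixtures), it lies below every
`c_a`, and it equals `c_{a*}` at `p_{a*}`, so it elicits `a*` with zero surplus. -/

open Finset

section

variable {A Ω : Type*} [Fintype A]

def IsMixtureWeight (pdist : A → Ω → ℝ) (p : Ω → ℝ) (lam : A → ℝ) : Prop :=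
  (∀ a, 0 ≤ lam a) ∧ ∑ a, lam a = 1 ∧ ∀ ω, ∑ a, lam a * pdist a ω = p ω

namespace IsMixtureWeight

variable {pdist : A → Ω → ℝ} {p q : Ω → ℝ} {lam mu : A → ℝ}

theorem pi_single [DecidableEq A] (pdist : A → Ω → ℝ) (a : A) :
    IsMixtureWeight pdist (pdist a) (Pi.single a 1) :=
  ⟨fun b => by by_cases h : b = a <;> simp [h], by simp, fun ω => by simp [Pi.single_apply]⟩

theorem sum_smul_eq (h : IsMixtureWeight pdist p lam) : ∑ a, lam a • pdist a = p := by
  funext ω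
  simpa using h.2.2 ω

theorem convex_combination (hlam : IsMixtureWeight pdist p lam)
    (hmu : IsMixtureWeight pdist q mu) {s t : ℝ} (hs : 0 ≤ s) (ht : 0 ≤ t) (hst : s + t = 1) :
    IsMixtureWeight pdist (s • p + t • q) (s • lam + t • mu) := by
  obtain ⟨hlam0, hlam1, hlamp⟩ := hlam
  obtain ⟨hmu0, hmu1, hmup⟩ := hmu
  refine ⟨fun a => ?_, ?_, fun ω => ?_⟩
  · simpa using add_nonneg (mul_nonneg hs (hlam0 a)) (mul_nonneg ht (hmu0 a))
  · simp [sum_add_distrib, ← mul_sum, hlam1, hmu1, hst]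
  · simp only [Pi.add_apply, Pi.smul_apply, smul_eq_mul, add_mul, mul_assoc, sum_add_distrib,
      ← mul_sum, hlamp, hmup]

end IsMixtureWeight

theorem mixture_cost_convex_combination (cost : A → ℝ) (lam mu : A → ℝ) (s t : ℝ) :
    ∑ a, (s • lam + t • mu) a * cost a = s * ∑ a, lam a * cost a + t * ∑ a, mu a * cost a := by
  simp only [Pi.add_apply, Pi.smul_apply, smul_eq_mul, add_mul, mul_assoc, sum_add_distrib,
    ← mul_sum]

theorem convexOn_of_eq_min_mixture_cost {pdist : A → Ω → ℝ} {cost : A → ℝ}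
    {c : (Ω → ℝ) → ℝ} {S : Set (Ω → ℝ)} (hS : Convex ℝ S)
    (hattain : ∀ p ∈ S, ∃ lam, IsMixtureWeight pdist p lam ∧ ∑ a, lam a * cost a = c p)
    (hle : ∀ p ∈ S, ∀ lam, IsMixtureWeight pdist p lam → c p ≤ ∑ a, lam a * cost a) :
    ConvexOn ℝ S c := by
  refine ⟨hS, fun p hpS q hqS s t hs ht hst => ?_⟩
  obtain ⟨lam, hlam, hlamc⟩ := hattain p hpS
  obtain ⟨mu, hmu, hmuc⟩ := hattain q hqS
  calc c (s • p + t • q)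
      ≤ ∑ a, (s • lam + t • mu) a * cost a :=
        hle _ (hS hpS hqS hs ht hst) _ (hlam.convex_combination hmu hs ht hst)
    _ = s • c p + t • c q := by
        rw [mixture_cost_convex_combination, hlamc, hmuc, smul_eq_mul, smul_eq_mul]

theorem cost_le_mixture_cost_of_incentive {pdist : A → Ω → ℝ} {cost : A → ℝ}
    {S : Set (Ω → ℝ)} {G : (Ω → ℝ) → ℝ} {astar : A} {lam : A → ℝ}
    (hG : ConvexOn ℝ S G) (hS : ∀ a, pdist a ∈ S)
    (hIC : ∀ a, G (pdist a) - cost a ≤ G (pdist astar) - cost astar)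
    (hlam : IsMixtureWeight pdist (pdist astar) lam) :
    cost astar ≤ ∑ a, lam a * cost a := by
  obtain ⟨hlam0, hlam1, -⟩ := id hlam
  have hjensen : G (pdist astar) ≤ ∑ a, lam a * G (pdist a) := by
    simpa [hlam.sum_smul_eq] using
      hG.map_sum_le (t := univ) (fun a _ => hlam0 a) hlam1 (fun a _ => hS a)
  have hincentive : ∑ a, lam a * G (pdist a) ≤
      ∑ a, lam a * cost a + (G (pdist astar) - cost astar) := by
    calc ∑ a, lam a * G (pdist a)
        ≤ ∑ a, lam a * (cost a + (G (pdist astar) - cost astar)) :=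
          sum_le_sum fun a _ => mul_le_mul_of_nonneg_left (by linarith [hIC a]) (hlam0 a)
      _ = ∑ a, lam a * cost a + (G (pdist astar) - cost astar) := by
          simp only [mul_add, sum_add_distrib, ← sum_mul, hlam1, one_mul]
  linarith

end

theorem elicitable_iff_on_cost_curve_general {A Ω : Type*} [Fintype A]
    (pdist : A → Ω → ℝ)
    (cost : A → ℝ)
    (c : (Ω → ℝ) → ℝ)
    -- `c` is the convexified cost curve: the minimum mixture cost implementing `p`
    (hc : ∀ p ∈ convexHull ℝ (Set.range pdist),
      (∃ lam : A → ℝ, (∀ a, 0 ≤ lam a) ∧ (∑ a, lam a) = 1 ∧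
        (∀ ω, ∑ a, lam a * pdist a ω = p ω) ∧ (∑ a, lam a * cost a) = c p) ∧
      (∀ lam : A → ℝ, (∀ a, 0 ≤ lam a) → (∑ a, lam a) = 1 →
        (∀ ω, ∑ a, lam a * pdist a ω = p ω) → c p ≤ ∑ a, lam a * cost a))
    (astar : A) :
    (∃ G : (Ω → ℝ) → ℝ, ConvexOn ℝ (convexHull ℝ (Set.range pdist)) G ∧
      (∀ a, G (pdist astar) - cost astar ≥ G (pdist a) - cost a) ∧
      0 ≤ G (pdist astar) - cost astar)
    ↔ c (pdist astar) = cost astar := by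
  classical
  have hhull : ∀ a, pdist a ∈ convexHull ℝ (Set.range pdist) :=
    fun a => subset_convexHull ℝ _ ⟨a, rfl⟩
  have hattain : ∀ p ∈ convexHull ℝ (Set.range pdist),
      ∃ lam, IsMixtureWeight pdist p lam ∧ ∑ a, lam a * cost a = c p := fun p hp => by
    obtain ⟨lam, h0, h1, hmix, hcost⟩ := (hc p hp).1
    exact ⟨lam, ⟨h0, h1, hmix⟩, hcost⟩
  have hle : ∀ p ∈ convexHull ℝ (Set.range pdist), ∀ lam,
      IsMixtureWeight pdist p lam → c p ≤ ∑ a, lam a * cost a :=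
    fun p hp lam hlam => (hc p hp).2 lam hlam.1 hlam.2.1 hlam.2.2
  have hc_le_cost : ∀ a, c (pdist a) ≤ cost a := fun a => by
    simpa [Pi.single_apply] using hle _ (hhull a) _ (IsMixtureWeight.pi_single pdist a)
  constructor
  · rintro ⟨G, hG, hIC, -⟩
    obtain ⟨lam, hlam, hlamc⟩ := hattain _ (hhull astar)
    refine (hc_le_cost astar).antisymm ?_
    exact hlamc ▸ cost_le_mixture_cost_of_incentive hG hhull hIC hlam
  · intro hstar
    refine ⟨c, convexOn_of_eq_min_mixture_cost (convex_convexHull ℝ _) hattain hle,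
      fun a => ?_, sub_nonneg.2 hstar.ge⟩
    linarith [hc_le_cost a]

/-- An action `a*` is elicitable (some convex menu satisfies the incentive and
participation constraints) if and only if `c(p_{a*}) = c_{a*}`, i.e. the point
`(p_{a*}, c_{a*})` lies on the lower boundary of the convex hull of the points
`(p_a, c_a)`. -/
theorem elicitable_iff_on_cost_curve {A Ω : Type*} [Fintype A] [Fintype Ω]
    (pdist : A → Ω → ℝ) (hp : ∀ a, pdist a ∈ stdSimplex ℝ Ω)
    (cost : A → ℝ) (hcost : ∀ a, 0 ≤ cost a)
    (c : (Ω → ℝ) → ℝ)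
    -- `c` is the convexified cost curve: the minimum mixture cost implementing `p`
    (hc : ∀ p ∈ convexHull ℝ (Set.range pdist),
      (∃ lam : A → ℝ, (∀ a, 0 ≤ lam a) ∧ (∑ a, lam a) = 1 ∧
        (∀ ω, ∑ a, lam a * pdist a ω = p ω) ∧ (∑ a, lam a * cost a) = c p) ∧
      (∀ lam : A → ℝ, (∀ a, 0 ≤ lam a) → (∑ a, lam a) = 1 →
        (∀ ω, ∑ a, lam a * pdist a ω = p ω) → c p ≤ ∑ a, lam a * cost a))
    (astar : A) :
    (∃ G : (Ω → ℝ) → ℝ, ConvexOn ℝ (convexHull ℝ (Set.range pdist)) G ∧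
      (∀ a, G (pdist astar) - cost astar ≥ G (pdist a) - cost a) ∧
      0 ≤ G (pdist astar) - cost astar)
    ↔ c (pdist astar) = cost astar :=
  elicitable_iff_on_cost_curve_general pdist cost c hc astar
end

section
/- Let a* be elicitable and let v ∈ ∂c(p_{a*}) be any subgradient of the convexified cost curve c at p_{a*}. Then the single contract t(ω) = c(p_{a*}) + v·(δ_ω − p_{a*}) + max{0, β}, where β = −(c(p_{a*}) + min_ω v(ω) − v·p_{a*}), satisfies limited liability (t(ω) ≥ 0 for all ω), the participation constraint, and all incentive constraints, i.e. the singleton menu {t} elicits a*. -/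
open Finset

/-- If `a*` is elicitable and `v` is a subgradient of the convexified cost curve `c`
at `p_{a*}`, then the single contract
`t(ω) = c(p_{a*}) + v·(δ_ω - p_{a*}) + max{0, β}`, with
`β = -(c(p_{a*}) + min_ω v(ω) - v·p_{a*})`, satisfies limited liability,
participation, and all incentive constraints: the singleton menu `{t}` elicits `a*`. -/
theorem single_contract_optimal_form {A Ω : Type*} [Fintype A] [Fintype Ω] [Nonempty Ω]
    (pdist : A → Ω → ℝ) (hp : ∀ a, pdist a ∈ stdSimplex ℝ Ω)
    (cost : A → ℝ) (hcost : ∀ a, 0 ≤ cost a)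
    (c : (Ω → ℝ) → ℝ)
    -- `c` is the convexified cost curve
    (hc : ∀ p ∈ convexHull ℝ (Set.range pdist),
      (∃ lam : A → ℝ, (∀ a, 0 ≤ lam a) ∧ (∑ a, lam a) = 1 ∧
        (∀ ω, ∑ a, lam a * pdist a ω = p ω) ∧ (∑ a, lam a * cost a) = c p) ∧
      (∀ lam : A → ℝ, (∀ a, 0 ≤ lam a) → (∑ a, lam a) = 1 →
        (∀ ω, ∑ a, lam a * pdist a ω = p ω) → c p ≤ ∑ a, lam a * cost a))
    (astar : A)
    (helic : c (pdist astar) = cost astar)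
    (v : Ω → ℝ)
    -- `v` is a subgradient of `c` at `p_{a*}`
    (hv : ∀ p ∈ convexHull ℝ (Set.range pdist),
      c (pdist astar) + ∑ ω, v ω * (p ω - pdist astar ω) ≤ c p) :
    -- with `β` the shift required for limited liability and `t` the shifted subtangent,
    ∀ β t, β = -(c (pdist astar) +
        (Finset.univ.inf' Finset.univ_nonempty v) - ∑ ω, v ω * pdist astar ω) →
      t = (fun ω => c (pdist astar) + (v ω - ∑ ω', v ω' * pdist astar ω') + max 0 β) →
      (∀ ω, 0 ≤ t ω) ∧
      (0 ≤ (∑ ω, pdist astar ω * t ω) - cost astar) ∧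
      (∀ a, (∑ ω, pdist astar ω * t ω) - cost astar ≥
        (∑ ω, pdist a ω * t ω) - cost a) := by
  classical
  intro β t hβ ht
  set S := ∑ ω', v ω' * pdist astar ω' with hS
  have hsum : ∀ a, ∑ ω, pdist a ω = 1 := fun a => (hp a).2
  have hmem : ∀ a, pdist a ∈ convexHull ℝ (Set.range pdist) :=
    fun a => subset_convexHull ℝ _ ⟨a, rfl⟩
  -- c (pdist a) ≤ cost a
  have hca : ∀ a, c (pdist a) ≤ cost a := by
    intro a
    have h2 := (hc (pdist a) (hmem a)).2 (fun a' => if a' = a then 1 else 0)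
      (by intro a'; by_cases h : a' = a <;> simp [h])
      (by simp)
      (by intro ω; simp [ite_mul])
    simpa using h2
  -- subgradient inequality rearranged
  have hineq : ∀ a, (∑ ω, pdist a ω * v ω) - S ≤ cost a - c (pdist astar) := by
    intro a
    have h := hv (pdist a) (hmem a)
    have hexp : ∑ ω, v ω * (pdist a ω - pdist astar ω)
        = (∑ ω, pdist a ω * v ω) - S := by
      simp only [mul_sub]
      rw [hS, Finset.sum_sub_distrib]
      congr 1
      exact Finset.sum_congr rfl (fun ω _ => mul_comm _ _)
    have := hca a
    rw [hexp] at h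
    linarith
  -- expected transfer formula
  have key : ∀ a, ∑ ω, pdist a ω * t ω
      = (c (pdist astar) - S + max 0 β) + ∑ ω, pdist a ω * v ω := by
    intro a
    have h1 : ∑ ω, pdist a ω * t ω =
        ∑ ω, (pdist a ω * (c (pdist astar) - S + max 0 β) + pdist a ω * v ω) := by
      refine Finset.sum_congr rfl (fun ω _ => ?_)
      rw [ht]; ring
    rw [h1, Finset.sum_add_distrib, ← Finset.sum_mul, hsum a, one_mul]
  have hstar : ∑ ω, pdist astar ω * t ω = c (pdist astar) + max 0 β := by
    rw [key astar]
    have : ∑ ω, pdist astar ω * v ω = S := by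
      rw [hS]; exact Finset.sum_congr rfl (fun ω _ => mul_comm _ _)
    rw [this]; ring
  refine ⟨?_, ?_, ?_⟩
  · intro ω
    have h1 : Finset.univ.inf' Finset.univ_nonempty v ≤ v ω :=
      Finset.inf'_le _ (Finset.mem_univ ω)
    have h2 : β ≤ max 0 β := le_max_right _ _
    rw [ht]
    simp only
    linarith [hβ]
  · rw [hstar, helic]
    have := le_max_left 0 β
    linarith
  · intro a
    rw [hstar, key a, helic]
    have := hineq a
    linarith
end

section
/- Let a* be elicitable. Then (p_{a*}, c_{a*}) is a lower vertex of convhull({(p_a,c_a) : a ∈ A}) and v is a strict subgradient of c at p_{a*} if and only if the contract t(ω) = c(p_{a*}) + v·(δ_ω − p_{a*}) satisfies t̄(p_a) − c_a < t̄(p_{a*}) − c_{a*} for every a ≠ a* (strict incentive constraints). -/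
open Finset

/-- Let `a*` be elicitable. Then `(p_{a*}, c_{a*})` is a lower vertex of the convex
hull of the points `(p_a, c_a)` and `v` is a strict subgradient of the convexified
cost curve `c` at `p_{a*}` if and only if the contract
`t(ω) = c(p_{a*}) + v·(δ_ω - p_{a*})` satisfies every incentive constraint for
`a ≠ a*` with strict inequality. -/
theorem strict_subgradient_iff_strict_incentives {A Ω : Type*} [Fintype A] [Fintype Ω]
    (pdist : A → Ω → ℝ) (hp : ∀ a, pdist a ∈ stdSimplex ℝ Ω)
    (cost : A → ℝ) (hcost : ∀ a, 0 ≤ cost a)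
    (c : (Ω → ℝ) → ℝ)
    -- `c` is the convexified cost curve
    (hc : ∀ p ∈ convexHull ℝ (Set.range pdist),
      (∃ lam : A → ℝ, (∀ a, 0 ≤ lam a) ∧ (∑ a, lam a) = 1 ∧
        (∀ ω, ∑ a, lam a * pdist a ω = p ω) ∧ (∑ a, lam a * cost a) = c p) ∧
      (∀ lam : A → ℝ, (∀ a, 0 ≤ lam a) → (∑ a, lam a) = 1 →
        (∀ ω, ∑ a, lam a * pdist a ω = p ω) → c p ≤ ∑ a, lam a * cost a))
    (astar : A)
    (helic : c (pdist astar) = cost astar)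
    (v : Ω → ℝ)
    (t : Ω → ℝ)
    (ht : t = fun ω => c (pdist astar) + (v ω - ∑ ω', v ω' * pdist astar ω')) :
    -- lower vertex of the hull of the `(p_a, c_a)`:
    ((∀ lam : A → ℝ, (∀ a, 0 ≤ lam a) → lam astar = 0 → (∑ a, lam a) = 1 →
        (∀ ω, ∑ a, lam a * pdist a ω = pdist astar ω) →
        cost astar < ∑ a, lam a * cost a) ∧
      -- `v` is a strict subgradient of `c` at `p_{a*}`:
      (∀ p ∈ convexHull ℝ (Set.range pdist), p ≠ pdist astar →
        c (pdist astar) + ∑ ω, v ω * (p ω - pdist astar ω) < c p))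
    ↔
    (∀ a, a ≠ astar →
      (∑ ω, pdist a ω * t ω) - cost a <
        (∑ ω, pdist astar ω * t ω) - cost astar) := by
  subst ht
  classical
  set V : (Ω → ℝ) → ℝ := fun q => ∑ ω, v ω * q ω with hV
  have hVt : ∀ q : Ω → ℝ, (∑ ω, q ω) = 1 →
      (∑ ω, q ω * (c (pdist astar) + (v ω - ∑ ω', v ω' * pdist astar ω')))
        = c (pdist astar) + (V q - V (pdist astar)) := by
    intro q hq
    have h1 : ∀ ω : Ω, q ω * (c (pdist astar) + (v ω - ∑ ω', v ω' * pdist astar ω'))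
        = q ω * (c (pdist astar) - ∑ ω', v ω' * pdist astar ω') + v ω * q ω := by
      intro ω; ring
    rw [Finset.sum_congr rfl (fun ω _ => h1 ω), Finset.sum_add_distrib, ← Finset.sum_mul, hq]
    simp [hV]; ring
  have hSdiff : ∀ q : Ω → ℝ, (∑ ω, v ω * (q ω - pdist astar ω)) = V q - V (pdist astar) := by
    intro q
    simp only [mul_sub, Finset.sum_sub_distrib, hV]
  have hIC : ∀ a : A,
      ((∑ ω, pdist a ω * (c (pdist astar) + (v ω - ∑ ω', v ω' * pdist astar ω'))) - cost a <
        (∑ ω, pdist astar ω * (c (pdist astar) + (v ω - ∑ ω', v ω' * pdist astar ω'))) - cost astar)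
      ↔ c (pdist astar) + (V (pdist a) - V (pdist astar)) < cost a := by
    intro a
    rw [hVt (pdist a) (hp a).2, hVt (pdist astar) (hp astar).2]
    constructor <;> intro h <;> linarith [helic]
  have hmem : ∀ a : A, pdist a ∈ convexHull ℝ (Set.range pdist) :=
    fun a => subset_convexHull ℝ _ ⟨a, rfl⟩
  have hind : ∀ a : A, ∀ f : A → ℝ, (∑ b, (if b = a then (1:ℝ) else 0) * f b) = f a := by
    intro a f
    rw [Finset.sum_eq_single a] <;> simp +contextual
  have hclea : ∀ a : A, c (pdist a) ≤ cost a := by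
    intro a
    have h := (hc (pdist a) (hmem a)).2 (fun b => if b = a then 1 else 0)
      (fun b => by by_cases h : b = a <;> simp [h])
      (by rw [Finset.sum_eq_single a] <;> simp +contextual)
      (fun ω => hind a (fun b => pdist b ω))
    rw [hind a cost] at h
    exact h
  have hlin : ∀ lam : A → ℝ, (∑ a, lam a) = 1 →
      (∑ a, lam a * (c (pdist astar) + (V (pdist a) - V (pdist astar))))
        = c (pdist astar) + (V (fun ω => ∑ a, lam a * pdist a ω) - V (pdist astar)) := by
    intro lam hs1
    have hswap : ∑ a, lam a * V (pdist a) = V (fun ω => ∑ a, lam a * pdist a ω) := by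
      simp only [hV, Finset.mul_sum]
      rw [Finset.sum_comm]
      exact Finset.sum_congr rfl fun ω _ => Finset.sum_congr rfl fun a _ => by ring
    calc ∑ a, lam a * (c (pdist astar) + (V (pdist a) - V (pdist astar)))
        = ∑ a, (lam a * (c (pdist astar) - V (pdist astar)) + lam a * V (pdist a)) :=
          Finset.sum_congr rfl fun a _ => by ring
      _ = (∑ a, lam a) * (c (pdist astar) - V (pdist astar)) + ∑ a, lam a * V (pdist a) := by
          rw [Finset.sum_add_distrib, Finset.sum_mul]
      _ = c (pdist astar) + (V (fun ω => ∑ a, lam a * pdist a ω) - V (pdist astar)) := by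
          rw [hs1, hswap]; ring
  constructor
  · rintro ⟨hlv, hsg⟩ a ha
    rw [hIC a]
    by_cases hpa : pdist a = pdist astar
    · have h := hlv (fun b => if b = a then 1 else 0)
        (fun b => by by_cases h : b = a <;> simp [h])
        (by simp [ha.symm])
        (by rw [Finset.sum_eq_single a] <;> simp +contextual)
        (fun ω => by rw [hind a (fun b => pdist b ω), hpa])
      rw [hind a cost] at h
      rw [hpa]
      linarith [helic]
    · have h1 := hsg (pdist a) (hmem a) hpa
      rw [hSdiff (pdist a)] at h1
      linarith [hclea a]
  · intro hIC'
    have key : ∀ lam : A → ℝ, (∀ a, 0 ≤ lam a) → ∀ a : A,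
        lam a * (c (pdist astar) + (V (pdist a) - V (pdist astar))) ≤ lam a * cost a := by
      intro lam hpos a
      by_cases h : a = astar
      · subst h; simp only [sub_self, add_zero, helic]; exact le_refl _
      · exact mul_le_mul_of_nonneg_left (le_of_lt ((hIC a).mp (hIC' a h))) (hpos a)
    constructor
    · intro lam hpos h0 hs1 hcomb
      have hex : ∃ a, 0 < lam a := by
        by_contra h
        push_neg at h
        have hz : ∀ a ∈ Finset.univ, lam a = 0 := fun a _ => le_antisymm (h a) (hpos a)
        rw [Finset.sum_eq_zero hz] at hs1
        norm_num at hs1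
      obtain ⟨a₀, ha₀⟩ := hex
      have ha₀ne : a₀ ≠ astar := by
        rintro rfl; rw [h0] at ha₀; exact lt_irrefl _ ha₀
      have hstrict : ∑ a, lam a * (c (pdist astar) + (V (pdist a) - V (pdist astar)))
          < ∑ a, lam a * cost a :=
        Finset.sum_lt_sum (fun a _ => key lam hpos a)
          ⟨a₀, Finset.mem_univ a₀,
            mul_lt_mul_of_pos_left ((hIC a₀).mp (hIC' a₀ ha₀ne)) ha₀⟩
      rw [hlin lam hs1] at hstrict
      have hpe : (fun ω => ∑ a, lam a * pdist a ω) = pdist astar := funext hcomb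
      rw [hpe] at hstrict
      simp only [sub_self, add_zero] at hstrict
      linarith [helic]
    · intro p hpmem hpne
      obtain ⟨lam, hpos, hs1, hcomb, hcp⟩ := (hc p hpmem).1
      rw [hSdiff p]
      have hex : ∃ a, a ≠ astar ∧ 0 < lam a := by
        by_contra h
        push_neg at h
        have hz : ∀ a : A, a ≠ astar → lam a = 0 := fun a ha =>
          le_antisymm (h a ha) (hpos a)
        have h1 : lam astar = 1 := by
          rw [Finset.sum_eq_single astar (fun b _ hb => by
            rw [hz b hb]) (fun h => absurd (Finset.mem_univ astar) h)] at hs1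
          exact hs1
        apply hpne
        funext ω
        rw [← hcomb ω, Finset.sum_eq_single astar (fun b _ hb => by rw [hz b hb, zero_mul])
          (fun h => absurd (Finset.mem_univ astar) h), h1, one_mul]
      obtain ⟨a₀, ha₀ne, ha₀⟩ := hex
      have hstrict : ∑ a, lam a * (c (pdist astar) + (V (pdist a) - V (pdist astar)))
          < ∑ a, lam a * cost a :=
        Finset.sum_lt_sum (fun a _ => key lam hpos a)
          ⟨a₀, Finset.mem_univ a₀,
            mul_lt_mul_of_pos_left ((hIC a₀).mp (hIC' a₀ ha₀ne)) ha₀⟩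
      rw [hlin lam hs1] at hstrict
      have hpe : (fun ω => ∑ a, lam a * pdist a ω) = p := funext hcomb
      rw [hpe, hcp] at hstrict
      exact hstrict
end

section
/- An action a* is strictly elicitable (there is a convex menu G satisfying participation and all incentive constraints with strict inequality for a ≠ a*) if and only if (p_{a*}, c_{a*}) is a lower vertex of the convex hull of {(p_a, c_a) : a ∈ A}. -/
/-!
Necessity is Jensen's inequality: if `p a*` is a convex combination `∑ λ_a p_a` of the other
actions, convexity gives `G (p a*) ≤ ∑ λ_a G (p a)`, and averaging the strict incentive
constraints then forces `c a* < ∑ λ_a c_a`.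

Sufficiency is a strict subgradient argument. Put `v_a = (p_a - p_{a*}, c_a - c_{a*})` for
`a ≠ a*`. The lower vertex condition says that every point of the convex hull of the `v_a` lying
on the axis `{0} × ℝ` is strictly above the origin, so the origin is not in the compact convex hull
of the `v_a` together with `(0, 1)`. A separating functional, normalised on `(0, 1)`, is
`(x, d) ↦ d - ℓ x` with `ℓ x < d` at every `v_a`, and the affine menu
`G x = c_{a*} + ℓ (x - p_{a*})` satisfies all constraints.
-/

open Finset Set

theorem Fintype.sum_mul_lt_of_lt_of_ne_zero {ι 𝕜 : Type*} [Fintype ι] [Field 𝕜] [LinearOrder 𝕜]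
    [IsStrictOrderedRing 𝕜] {w u : ι → 𝕜} {M : 𝕜} (hw₀ : ∀ i, 0 ≤ w i) (hw₁ : ∑ i, w i = 1)
    (hu : ∀ i, w i ≠ 0 → u i < M) : ∑ i, w i * u i < M := by
  obtain ⟨j, hj⟩ : ∃ j, w j ≠ 0 := by
    by_contra! h
    simp [h] at hw₁
  calc ∑ i, w i * u i < ∑ i, w i * M := by
        refine Finset.sum_lt_sum (fun i _ => ?_) ⟨j, mem_univ j, ?_⟩
        · rcases eq_or_ne (w i) 0 with h | h
          · simp [h]
          · exact mul_le_mul_of_nonneg_left (hu i h).le (hw₀ i)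
        · exact mul_lt_mul_of_pos_left (hu j hj) ((hw₀ j).lt_of_ne' hj)
    _ = M := by rw [← sum_mul, hw₁, one_mul]

theorem convexHull_range_eq_image_stdSimplex {ι E : Type*} [Fintype ι] [AddCommGroup E]
    [Module ℝ E] (v : ι → E) :
    convexHull ℝ (range v) = (fun w : ι → ℝ => ∑ i, w i • v i) '' stdSimplex ℝ ι := by
  classical
  let L : (ι → ℝ) →ₗ[ℝ] E := ∑ i, (LinearMap.proj i).smulRight (v i)
  have hL : ⇑L = fun w => ∑ i, w i • v i := by ext w; simp [L]
  rw [← hL, ← convexHull_basis_eq_stdSimplex, LinearMap.image_convexHull, ← range_comp]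
  congr 2
  ext i
  simp [hL]

theorem zero_notMem_convexHull_insert {E : Type*} [AddCommGroup E] [Module ℝ E]
    {S : Set (E × ℝ)} (hS : S.Nonempty)
    (h : ∀ z ∈ convexHull ℝ S, z.1 = 0 → 0 < z.2) :
    (0 : E × ℝ) ∉ convexHull ℝ (insert (0, 1) S) := by
  rw [convexHull_insert hS, mem_convexJoin]
  rintro ⟨_, rfl, y, hy, a, b, ha, hb, hab, hzero⟩
  have hfst : b • y.1 = 0 := by simpa using congrArg Prod.fst hzero
  have hsnd : a + b * y.2 = 0 := by simpa using congrArg Prod.snd hzero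
  rcases hb.eq_or_lt with rfl | hb
  · simp_all
  · have := h y hy ((smul_eq_zero.mp hfst).resolve_left hb.ne')
    nlinarith

section Separation

variable {E : Type*} [AddCommGroup E] [Module ℝ E] [TopologicalSpace E] [IsTopologicalAddGroup E]
  [ContinuousSMul ℝ E] [LocallyConvexSpace ℝ E] [T2Space E]

theorem Set.Finite.exists_continuousLinearMap_lt_snd {S : Set (E × ℝ)} (hfin : S.Finite)
    (h : ∀ z ∈ convexHull ℝ S, z.1 = 0 → 0 < z.2) :
    ∃ ℓ : E →L[ℝ] ℝ, ∀ z ∈ S, ℓ z.1 < z.2 := by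
  rcases S.eq_empty_or_nonempty with rfl | hS
  · exact ⟨0, by simp⟩
  obtain ⟨f, u, hfu, hf⟩ := geometric_hahn_banach_point_closed (convex_convexHull ℝ _)
    ((hfin.insert (0, 1)).isCompact_convexHull (𝕜 := ℝ)).isClosed
    (zero_notMem_convexHull_insert hS h)
  have hpos : ∀ z ∈ insert ((0 : E), (1 : ℝ)) S, 0 < f z := fun z hz =>
    (map_zero f ▸ hfu).trans (hf z (subset_convexHull ℝ _ hz))
  have ht : 0 < f (0, 1) := hpos _ (mem_insert _ _)
  refine ⟨-(f (0, 1))⁻¹ • f.comp (.inl ℝ E ℝ), fun z hz => ?_⟩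
  have hsplit : f z = f (z.1, 0) + z.2 * f (0, 1) := by
    rw [← smul_eq_mul, ← map_smul, ← map_add]
    simp
  have := hpos z (mem_insert_of_mem _ hz)
  simp only [smul_apply, ContinuousLinearMap.comp_apply,
    ContinuousLinearMap.inl_apply, smul_eq_mul, neg_mul]
  rw [neg_lt, ← div_eq_inv_mul, lt_div_iff₀ ht]
  linarith

end Separation

theorem Fintype.sum_dite_ne_smul {ι R M : Type*} [Fintype ι] [DecidableEq ι] [Semiring R]
    [AddCommMonoid M] [Module R M] (i₀ : ι) (w : {i // i ≠ i₀} → R) (x : ι → M) :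
    ∑ i, (if h : i = i₀ then 0 else w ⟨i, h⟩) • x i = ∑ j, w j • x j := by
  rw [Fintype.sum_eq_add_sum_subtype_ne _ i₀]
  simp only [dite_true, zero_smul, zero_add]
  exact Fintype.sum_congr _ _ fun j => by rw [dif_neg j.2]

section Elicitation

variable {ι E : Type*} [Fintype ι] [AddCommGroup E] [Module ℝ E] {p : ι → E} {c : ι → ℝ}
  {i₀ : ι}

theorem cost_lt_sum_mul_cost_of_convexOn {G : E → ℝ}
    (hG : ConvexOn ℝ (convexHull ℝ (range p)) G)
    (hG_lt : ∀ i, i ≠ i₀ → G (p i) - c i < G (p i₀) - c i₀) {w : ι → ℝ} (hw₀ : ∀ i, 0 ≤ w i)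
    (hwi₀ : w i₀ = 0) (hw₁ : ∑ i, w i = 1) (hwp : ∑ i, w i • p i = p i₀) :
    c i₀ < ∑ i, w i * c i := by
  have hjensen : G (p i₀) ≤ ∑ i, w i * G (p i) := by
    rw [← hwp]
    exact hG.map_sum_le (fun i _ => hw₀ i) hw₁
      (fun i _ => subset_convexHull ℝ _ (mem_range_self i))
  have hlt : ∑ i, w i * (G (p i) - c i) < G (p i₀) - c i₀ :=
    Fintype.sum_mul_lt_of_lt_of_ne_zero hw₀ hw₁ fun i hi =>
      hG_lt i (by rintro rfl; exact hi hwi₀)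
  simp only [mul_sub, sum_sub_distrib] at hlt
  linarith

theorem exists_continuousLinearMap_lt_of_lower_vertex [TopologicalSpace E]
    [IsTopologicalAddGroup E] [ContinuousSMul ℝ E] [LocallyConvexSpace ℝ E] [T2Space E]
    (h : ∀ w : ι → ℝ, (∀ i, 0 ≤ w i) → w i₀ = 0 → ∑ i, w i = 1 → ∑ i, w i • p i = p i₀ →
      c i₀ < ∑ i, w i * c i) :
    ∃ ℓ : E →L[ℝ] ℝ, ∀ i, i ≠ i₀ → ℓ (p i - p i₀) < c i - c i₀ := by
  classical
  let f : {i // i ≠ i₀} → E × ℝ := fun i => (p i - p i₀, c i - c i₀)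
  have hf : ∀ z ∈ convexHull ℝ (range f), z.1 = 0 → 0 < z.2 := by
    rw [convexHull_range_eq_image_stdSimplex]
    rintro _ ⟨w, ⟨hw₀, hw₁⟩, rfl⟩ hfst
    have hlt := h (fun i => if h : i = i₀ then 0 else w ⟨i, h⟩)
      (fun i => by split_ifs <;> simp [hw₀]) (by simp)
      (by simpa [hw₁] using Fintype.sum_dite_ne_smul i₀ w (fun _ => (1 : ℝ)))
      (by
        rw [Fintype.sum_dite_ne_smul]
        simpa [f, Prod.fst_sum, smul_sub, sum_sub_distrib, ← sum_smul, hw₁, sub_eq_zero] using hfst)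
    simp only [← smul_eq_mul, Fintype.sum_dite_ne_smul] at hlt
    simpa [f, Prod.snd_sum, mul_sub, sum_sub_distrib, ← sum_mul, hw₁] using hlt
  obtain ⟨ℓ, hℓ⟩ := (finite_range f).exists_continuousLinearMap_lt_snd hf
  exact ⟨ℓ, fun i hi => hℓ _ (mem_range_self ⟨i, hi⟩)⟩

end Elicitation

theorem strictly_elicitable_iff_lower_vertex_general {A Ω : Type*} [Fintype A]
    (pdist : A → Ω → ℝ)
    (cost : A → ℝ)
    (astar : A) :
    (∃ G : (Ω → ℝ) → ℝ, ConvexOn ℝ (convexHull ℝ (Set.range pdist)) G ∧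
      0 ≤ G (pdist astar) - cost astar ∧
      (∀ a, a ≠ astar →
        G (pdist a) - cost a < G (pdist astar) - cost astar))
    ↔
    (∀ lam : A → ℝ, (∀ a, 0 ≤ lam a) → lam astar = 0 → (∑ a, lam a) = 1 →
      (∀ ω, ∑ a, lam a * pdist a ω = pdist astar ω) →
      cost astar < ∑ a, lam a * cost a) := by
  have hcoord : ∀ lam : A → ℝ, ∑ a, lam a • pdist a = pdist astar ↔
      ∀ ω, ∑ a, lam a * pdist a ω = pdist astar ω := fun lam => by
    simp [funext_iff, Finset.sum_apply]
  constructor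
  · rintro ⟨G, hG, -, hG_lt⟩ lam hlam₀ hlam hlam₁ hlamp
    exact cost_lt_sum_mul_cost_of_convexOn hG hG_lt hlam₀ hlam hlam₁ ((hcoord lam).2 hlamp)
  · intro hvertex
    obtain ⟨ℓ, hℓ⟩ := exists_continuousLinearMap_lt_of_lower_vertex (p := pdist)
      fun w hw₀ hw hw₁ hwp => hvertex w hw₀ hw hw₁ ((hcoord w).1 hwp)
    refine ⟨fun x => (cost astar - ℓ (pdist astar)) + ℓ x,
      (convexOn_const _ (convex_convexHull ℝ _)).add
        (ℓ.toLinearMap.convexOn (convex_convexHull ℝ _)),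
      by simp, fun a ha => ?_⟩
    have := hℓ a ha
    rw [map_sub] at this
    linarith

/-- An action `a*` is strictly elicitable (some convex menu satisfies participation
and all incentive constraints strictly for `a ≠ a*`) if and only if
`(p_{a*}, c_{a*})` is a lower vertex of the convex hull of `{(p_a, c_a) : a ∈ A}`. -/
theorem strictly_elicitable_iff_lower_vertex {A Ω : Type*} [Fintype A] [Fintype Ω]
    (pdist : A → Ω → ℝ) (hp : ∀ a, pdist a ∈ stdSimplex ℝ Ω)
    (cost : A → ℝ) (hcost : ∀ a, 0 ≤ cost a)
    (astar : A) :
    (∃ G : (Ω → ℝ) → ℝ, ConvexOn ℝ (convexHull ℝ (Set.range pdist)) G ∧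
      0 ≤ G (pdist astar) - cost astar ∧
      (∀ a, a ≠ astar →
        G (pdist a) - cost a < G (pdist astar) - cost astar))
    ↔
    (∀ lam : A → ℝ, (∀ a, 0 ≤ lam a) → lam astar = 0 → (∑ a, lam a) = 1 →
      (∀ ω, ∑ a, lam a * pdist a ω = pdist astar ω) →
      cost astar < ∑ a, lam a * cost a) :=
  strictly_elicitable_iff_lower_vertex_general pdist cost astar
end

section
/- Suppose the general Contracts with Information Acquisition program has an optimal subdifferentiable convex solution G. Then the piecewise linear function G'(p) = max over pairs (a,σ) ∈ A × (Σ ∪ {⊥}) of h_{a,σ}(p), where h_{a,σ} is the chosen subtangent of G at p_{a,σ} (with p_{a,⊥} := p_a), is also feasible and attains the same objective value; hence an optimal solution exists that is a pointwise maximum of at most |A|·(|Σ|+1) affine functions. -/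
open Finset

/-- If `G` is an (optimal) feasible solution of the general Contracts with
Information Acquisition program, with chosen subtangents `h_{a,s}` (given by slopes
`v a s` and intercepts `b a s`) at each point `p_{a,σ}` and at each marginal `p_a`
(encoded as `s = none`), then the piecewise linear function
`G'(p) = max_{(a,s)} (v a s · p + b a s)` — a pointwise maximum of at most
`|A|·(|Σ|+1)` affine functions — is also feasible and attains the same objective
value. -/
theorem piecewise_linear_suffices {A S Ω : Type*}
    [Fintype A] [Nonempty A] [Fintype S] [Fintype Ω]
    (q : S → ℝ) (hq : q ∈ stdSimplex ℝ S)
    (pas : A → S → Ω → ℝ) (hpas : ∀ a σ, pas a σ ∈ stdSimplex ℝ Ω)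
    (cost : A → ℝ) (hcost : ∀ a, 0 ≤ cost a)
    (κ : ℝ) (hκ : 0 ≤ κ)
    (f : S → A)
    (G : (Ω → ℝ) → ℝ) (hG : ConvexOn ℝ (stdSimplex ℝ Ω) G)
    -- the evaluation points: `pt a (some σ) = p_{a,σ}` and `pt a none = p_a`
    (pt : A → Option S → (Ω → ℝ))
    (hptσ : ∀ a σ, pt a (some σ) = pas a σ)
    (hptm : ∀ a, pt a none = fun ω => ∑ σ, q σ * pas a σ ω)
    -- the chosen subtangents of `G` at those points
    (v : A → Option S → Ω → ℝ) (b : A → Option S → ℝ)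
    (htouch : ∀ a s, (∑ ω, v a s ω * pt a s ω) + b a s = G (pt a s))
    (hbelow : ∀ a s, ∀ p ∈ stdSimplex ℝ Ω, (∑ ω, v a s ω * p ω) + b a s ≤ G p)
    (hLL : ∀ a s ω, 0 ≤ v a s ω + b a s)
    -- feasibility of `G` for the general program
    (hc1 : ∀ a, (∑ σ, q σ * (G (pas (f σ) σ) - cost (f σ))) - κ ≥
      G (pt a none) - cost a)
    (hc2 : ∀ a σ, G (pas (f σ) σ) - cost (f σ) ≥ G (pas a σ) - cost a)
    (hc3 : (∑ σ, q σ * (G (pas (f σ) σ) - cost (f σ))) - κ ≥ 0) :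
    ∀ G' : (Ω → ℝ) → ℝ,
      G' = (fun p => Finset.univ.sup' Finset.univ_nonempty
        (fun as : A × Option S => (∑ ω, v as.1 as.2 ω * p ω) + b as.1 as.2)) →
      (∀ a, (∑ σ, q σ * (G' (pas (f σ) σ) - cost (f σ))) - κ ≥
        G' (pt a none) - cost a) ∧
      (∀ a σ, G' (pas (f σ) σ) - cost (f σ) ≥ G' (pas a σ) - cost a) ∧
      ((∑ σ, q σ * (G' (pas (f σ) σ) - cost (f σ))) - κ ≥ 0) ∧
      (∑ σ, q σ * G' (pas (f σ) σ)) = (∑ σ, q σ * G (pas (f σ) σ)) ∧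
      ConvexOn ℝ (stdSimplex ℝ Ω) G' := by
  intro G' hG'
  have hG'app : ∀ p, G' p = Finset.univ.sup' Finset.univ_nonempty
      (fun as : A × Option S => (∑ ω, v as.1 as.2 ω * p ω) + b as.1 as.2) := by
    intro p; rw [hG']
  have hmarg : ∀ a, pt a none ∈ stdSimplex ℝ Ω := by
    intro a
    rw [hptm]
    constructor
    · intro ω
      exact Finset.sum_nonneg fun σ _ => mul_nonneg (hq.1 σ) ((hpas a σ).1 ω)
    · rw [Finset.sum_comm]
      calc ∑ σ, ∑ ω, q σ * pas a σ ω = ∑ σ, q σ * ∑ ω, pas a σ ω := by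
            simp [Finset.mul_sum]
        _ = ∑ σ, q σ := by
            refine Finset.sum_congr rfl fun σ _ => ?_
            rw [(hpas a σ).2, mul_one]
        _ = 1 := hq.2
  have hpt : ∀ a s, pt a s ∈ stdSimplex ℝ Ω := by
    rintro a (_|σ)
    · exact hmarg a
    · rw [hptσ]; exact hpas a σ
  have hle : ∀ p ∈ stdSimplex ℝ Ω, G' p ≤ G p := by
    intro p hp
    rw [hG'app]
    exact Finset.sup'_le _ _ fun as _ => hbelow as.1 as.2 p hp
  have heq : ∀ a s, G' (pt a s) = G (pt a s) := by
    intro a s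
    refine le_antisymm (hle _ (hpt a s)) ?_
    rw [hG'app, ← htouch a s]
    exact Finset.le_sup'
      (fun as : A × Option S => (∑ ω, v as.1 as.2 ω * pt a s ω) + b as.1 as.2)
      (Finset.mem_univ (a, s))
  have heqσ : ∀ a σ, G' (pas a σ) = G (pas a σ) := by
    intro a σ; rw [← hptσ a σ]; exact heq a (some σ)
  refine ⟨?_, ?_, ?_, ?_, ?_⟩
  · intro a; simpa [heqσ, heq] using hc1 a
  · intro a σ; simpa [heqσ] using hc2 a σ
  · simpa [heqσ] using hc3
  · simp [heqσ]
  · refine ⟨convex_stdSimplex ℝ Ω, ?_⟩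
    intro x hx y hy t s ht hs hts
    rw [hG'app]
    refine Finset.sup'_le _ _ fun as _ => ?_
    have hkey : (∑ ω, v as.1 as.2 ω * (t • x + s • y) ω) + b as.1 as.2
        = t * ((∑ ω, v as.1 as.2 ω * x ω) + b as.1 as.2)
        + s * ((∑ ω, v as.1 as.2 ω * y ω) + b as.1 as.2) := by
      have : ∑ ω, v as.1 as.2 ω * (t • x + s • y) ω
          = t * (∑ ω, v as.1 as.2 ω * x ω) + s * (∑ ω, v as.1 as.2 ω * y ω) := by
        rw [Finset.mul_sum, Finset.mul_sum, ← Finset.sum_add_distrib]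
        refine Finset.sum_congr rfl fun ω _ => ?_
        simp only [Pi.add_apply, Pi.smul_apply, smul_eq_mul]
        ring
      rw [this]
      have hb : b as.1 as.2 = t * b as.1 as.2 + s * b as.1 as.2 := by
        rw [← add_mul, hts, one_mul]
      linarith
    rw [hkey]
    have h1 : (∑ ω, v as.1 as.2 ω * x ω) + b as.1 as.2 ≤ G' x := by
      rw [hG'app]
      exact Finset.le_sup'
        (fun as : A × Option S => (∑ ω, v as.1 as.2 ω * x ω) + b as.1 as.2)
        (Finset.mem_univ as)
    have h2 : (∑ ω, v as.1 as.2 ω * y ω) + b as.1 as.2 ≤ G' y := by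
      rw [hG'app]
      exact Finset.le_sup'
        (fun as : A × Option S => (∑ ω, v as.1 as.2 ω * y ω) + b as.1 as.2)
        (Finset.mem_univ as)
    have := mul_le_mul_of_nonneg_left h1 ht
    have := mul_le_mul_of_nonneg_left h2 hs
    simp only [smul_eq_mul]
    linarith
end

section
/- If a plan f : Σ → A is elicitable in the general Contracts with Information Acquisition problem, then for every σ ∈ Σ the conditional convexified cost curve satisfies c_σ(p_{f(σ),σ}) = c_{f(σ)}, i.e. for every λ ∈ Δ_A with E_{a∼λ} p_{a,σ} = p_{f(σ),σ} one has E_{a∼λ} c_a ≥ c_{f(σ)}. -/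
open Finset

/-- If a plan `f : Σ → A` is elicitable in the general Contracts with Information
Acquisition problem (some convex menu `G` satisfies the conditional incentive
constraints), then for every signal `σ` the action `f σ` lies on the conditional
convexified cost curve: every mixture `λ` of actions implementing the distribution
`p_{f(σ),σ}` has expected cost at least `c_{f(σ)}`. -/
theorem elicitable_plan_on_conditional_cost_curve {A S Ω : Type*}
    [Fintype A] [Fintype S] [Fintype Ω]
    (pas : A → S → Ω → ℝ) (hpas : ∀ a σ, pas a σ ∈ stdSimplex ℝ Ω)
    (cost : A → ℝ) (hcost : ∀ a, 0 ≤ cost a)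
    (f : S → A)
    (helic : ∃ G : (Ω → ℝ) → ℝ, ConvexOn ℝ (stdSimplex ℝ Ω) G ∧
      ∀ (a : A) (σ : S),
        G (pas (f σ) σ) - cost (f σ) ≥ G (pas a σ) - cost a) :
    ∀ σ : S, ∀ lam : A → ℝ, (∀ a, 0 ≤ lam a) → (∑ a, lam a) = 1 →
      (∀ ω, ∑ a, lam a * pas a σ ω = pas (f σ) σ ω) →
      cost (f σ) ≤ ∑ a, lam a * cost a := by
  obtain ⟨G, hG, hIC⟩ := helic
  intro σ lam hlam hsum hmix
  have hmean : ∑ a, lam a • pas a σ = pas (f σ) σ := by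
    funext ω
    simpa using hmix ω
  have hjensen : G (pas (f σ) σ) ≤ ∑ a, lam a * G (pas a σ) := by
    rw [← hmean]
    exact hG.map_sum_le (fun a _ => hlam a) (by simpa using hsum)
      (fun a _ => hpas a σ)
  have hbound : ∑ a, lam a * G (pas a σ) ≤
      ∑ a, lam a * (G (pas (f σ) σ) - cost (f σ) + cost a) := by
    apply Finset.sum_le_sum
    intro a _
    have := hIC a σ
    nlinarith [hlam a]
  have hsplit : ∑ a, lam a * (G (pas (f σ) σ) - cost (f σ) + cost a)
      = G (pas (f σ) σ) - cost (f σ) + ∑ a, lam a * cost a := by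
    simp [mul_add, Finset.sum_add_distrib, ← Finset.sum_mul, hsum]
  linarith [hjensen.trans (hbound.trans_eq hsplit)]
end
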